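/- arXiv:1510.06548 — 6 statements merged into one kernel-verified Lean document; each statement's English description precedes it below -/
import Mathlib

section
/- Let a : ℝ → ℝ be a C^∞, 2π-periodic, strictly positive function with (1/2π)∫₀^{2π} a(θ)^{−1}dθ = 1, let B(θ) = ∫₀^θ a(t)^{−1}dt, and for n ∈ ℤ define φₙ(θ) = (2π·a(θ))^{−1/2}·e^{inB(θ)}. Then for every n ∈ ℤ: (i) φₙ is 2π-periodic, i.e. φₙ(θ+2π) = φₙ(θ) for all θ ∈ ℝ; and (ii) φₙ satisfies the eigenvalue equation −i·a(θ)^{1/2}·(d/dθ)[a(θ)^{1/2}·φₙ(θ)] = n·φₙ(θ) for all θ ∈ ℝ. -/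
open MeasureTheory Real

noncomputable section

/-- The `k`-th Fourier coefficient of a `2π`-periodic function `u : ℝ → ℂ`:
`û(k) = (1/2π) ∫₀^{2π} u(θ) e^{-ikθ} dθ`. -/
def fCoef (u : ℝ → ℂ) (k : ℤ) : ℂ :=
  (2 * Real.pi)⁻¹ * ∫ θ in (0:ℝ)..(2 * Real.pi), u θ * Complex.exp (-Complex.I * k * θ)

/-- `B(θ) = ∫₀^θ a(t)⁻¹ dt`. -/
def Bfun (a : ℝ → ℝ) (θ : ℝ) : ℝ := ∫ t in (0:ℝ)..θ, (a t)⁻¹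

/-- `φₙ(θ) = (2π a(θ))^{-1/2} e^{i n B(θ)}`. -/
def phiFun (a : ℝ → ℝ) (n : ℤ) (θ : ℝ) : ℂ :=
  (Real.sqrt (2 * Real.pi * a θ))⁻¹ * Complex.exp (Complex.I * n * Bfun a θ)

/-- **Part of Lemma 2.1 of the paper.** For `a` smooth, `2π`-periodic, positive and
normalized by `(1/2π)∫₀^{2π} a⁻¹ = 1`, each `φₙ` is `2π`-periodic and satisfies the
eigenvalue equation `-i a^{1/2} (a^{1/2} φₙ)' = n φₙ` for the operator
`D_a = a^{1/2} ∘ (-i d/dθ) ∘ a^{1/2}`. -/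
theorem phiFun_periodic_and_eigenfunction
    (a : ℝ → ℝ) (ha : ContDiff ℝ (⊤ : ℕ∞) a) (haper : Function.Periodic a (2 * Real.pi))
    (hapos : ∀ θ, 0 < a θ)
    (hnorm : (2 * Real.pi)⁻¹ * ∫ θ in (0:ℝ)..(2 * Real.pi), (a θ)⁻¹ = 1) :
    ∀ n : ℤ,
      (∀ θ, phiFun a n (θ + 2 * Real.pi) = phiFun a n θ) ∧
      ∃ g : ℝ → ℂ, ∀ θ : ℝ,
        HasDerivAt (fun t => (Real.sqrt (a t) : ℂ) * phiFun a n t) (g θ) θ ∧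
        -Complex.I * (Real.sqrt (a θ) : ℂ) * g θ = n * phiFun a n θ := by
  have hacont : Continuous a := ha.continuous
  have hicont : Continuous fun t => (a t)⁻¹ := hacont.inv₀ fun t => (hapos t).ne'
  have hint : ∀ s t : ℝ, IntervalIntegrable (fun t => (a t)⁻¹) volume s t :=
    fun s t => hicont.intervalIntegrable s t
  have hiper : Function.Periodic (fun t => (a t)⁻¹) (2 * Real.pi) := fun t => by
    simp [haper t]
  have h2pi : (∫ t in (0:ℝ)..(2 * Real.pi), (a t)⁻¹) = 2 * Real.pi := by
    exact ((inv_mul_eq_one₀ (by positivity : (2 * Real.pi) ≠ 0)).mp hnorm).symm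
  have hBper : ∀ θ, Bfun a (θ + 2 * Real.pi) = Bfun a θ + 2 * Real.pi := by
    intro θ
    have hsplit : Bfun a (θ + 2 * Real.pi) =
        Bfun a θ + ∫ t in θ..(θ + 2 * Real.pi), (a t)⁻¹ :=
      (intervalIntegral.integral_add_adjacent_intervals (hint 0 θ) (hint θ _)).symm
    rw [hsplit, hiper.intervalIntegral_add_eq θ 0, zero_add, h2pi]
  have hBderiv : ∀ θ, HasDerivAt (Bfun a) (a θ)⁻¹ θ := fun θ =>
    intervalIntegral.integral_hasDerivAt_right (hint 0 θ)
      (hicont.stronglyMeasurableAtFilter _ _) hicont.continuousAt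
  intro n
  constructor
  · intro θ
    unfold phiFun
    rw [haper θ, hBper θ]
    congr 1
    push_cast
    rw [mul_add, Complex.exp_add]
    have : Complex.exp (Complex.I * n * (2 * Real.pi)) = 1 := by
      rw [show Complex.I * (n:ℂ) * (2 * Real.pi) = (n:ℂ) * (2 * Real.pi * Complex.I) by ring]
      exact Complex.exp_int_mul_two_pi_mul_I n
    rw [this, mul_one]
  · refine ⟨fun θ => ((Real.sqrt (2 * Real.pi) : ℝ) : ℂ)⁻¹ *
      (Complex.exp (Complex.I * n * Bfun a θ) * (Complex.I * n * ((a θ)⁻¹ : ℝ))), ?_⟩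
    intro θ
    have hsq : ∀ t, (Real.sqrt (a t) : ℂ) ≠ 0 := fun t => by
      exact_mod_cast (Real.sqrt_ne_zero'.2 (hapos t))
    have hfeq : (fun t => (Real.sqrt (a t) : ℂ) * phiFun a n t) =
        fun t => ((Real.sqrt (2 * Real.pi) : ℝ) : ℂ)⁻¹ *
          Complex.exp (Complex.I * n * Bfun a t) := by
      funext t
      unfold phiFun
      rw [Real.sqrt_mul (by positivity : (0:ℝ) ≤ 2 * Real.pi)]
      have h2 : ((Real.sqrt 2 : ℝ) : ℂ) ≠ 0 := by
        exact_mod_cast (Real.sqrt_ne_zero'.2 (by norm_num : (0:ℝ) < 2))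
      have hp : ((Real.sqrt Real.pi : ℝ) : ℂ) ≠ 0 := by
        exact_mod_cast (Real.sqrt_ne_zero'.2 Real.pi_pos)
      push_cast
      field_simp [hsq t]
    constructor
    · rw [hfeq]
      have hd1 : HasDerivAt (fun t => ((Bfun a t : ℝ) : ℂ)) (((a θ)⁻¹ : ℝ) : ℂ) θ :=
        (hBderiv θ).ofReal_comp
      have hd2 := (hd1.const_mul (Complex.I * n)).cexp
      exact hd2.const_mul _
    · unfold phiFun
      rw [Real.sqrt_mul (by positivity : (0:ℝ) ≤ 2 * Real.pi)]
      have hsq2 : ((Real.sqrt (2 * Real.pi) : ℝ) : ℂ) ≠ 0 := by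
        exact_mod_cast (Real.sqrt_ne_zero'.2 (by positivity : (0:ℝ) < 2 * Real.pi))
      have hsqa : ((Real.sqrt (a θ) : ℝ) : ℂ) * ((Real.sqrt (a θ) : ℝ) : ℂ) = (a θ : ℂ) := by
        rw [← Complex.ofReal_mul, Real.mul_self_sqrt (hapos θ).le]
      have haθ : ((a θ : ℝ) : ℂ) ≠ 0 := by exact_mod_cast (hapos θ).ne'
      push_cast
      field_simp [hsq θ, hsq2]
      have h2 : ((Real.sqrt 2 : ℝ) : ℂ) ≠ 0 := by
        exact_mod_cast (Real.sqrt_ne_zero'.2 (by norm_num : (0:ℝ) < 2))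
      have hp : ((Real.sqrt Real.pi : ℝ) : ℂ) ≠ 0 := by
        exact_mod_cast (Real.sqrt_ne_zero'.2 Real.pi_pos)
      ring_nf
      rw [Complex.I_sq, ← hsqa]
      field_simp [hsq θ, h2, hp]
end
end

section
/- Let a : ℝ → ℝ be a C^∞, 2π-periodic, strictly positive function with (1/2π)∫₀^{2π} a(θ)^{−1}dθ = 1, let B(θ) = ∫₀^θ a(t)^{−1}dt, and for n ∈ ℤ define φₙ(θ) = (2π·a(θ))^{−1/2}·e^{inB(θ)}. Then the family {φₙ}_{n∈ℤ} is an orthonormal basis of the Hilbert space L² of 2π-periodic functions with inner product (u,v) = ∫₀^{2π} u(θ)·conj(v(θ))dθ: one has ∫₀^{2π} φₙ(θ)·conj(φₘ(θ))dθ = 1 if n = m and = 0 if n ≠ m, and every square-integrable 2π-periodic u with ∫₀^{2π} u(θ)·conj(φₙ(θ))dθ = 0 for all n ∈ ℤ vanishes almost everywhere. -/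
open MeasureTheory Real

noncomputable section

open Set

variable {a : ℝ → ℝ}

lemma ainv_cont (ha : Continuous a) (hapos : ∀ θ, 0 < a θ) :
    Continuous fun t => (a t)⁻¹ := ha.inv₀ fun t => (hapos t).ne'

lemma hBderiv (ha : Continuous a) (hapos : ∀ θ, 0 < a θ) (θ : ℝ) :
    HasDerivAt (Bfun a) (a θ)⁻¹ θ := by
  have hc := ainv_cont ha hapos
  exact intervalIntegral.integral_hasDerivAt_right (hc.intervalIntegrable _ _)
    (hc.stronglyMeasurable.stronglyMeasurableAtFilter) hc.continuousAt

lemma hBsm (ha : Continuous a) (hapos : ∀ θ, 0 < a θ) : StrictMono (Bfun a) := by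
  apply strictMono_of_deriv_pos
  intro x
  rw [(hBderiv ha hapos x).deriv]
  exact inv_pos.2 (hapos x)

lemma hBcont (ha : Continuous a) (hapos : ∀ θ, 0 < a θ) : Continuous (Bfun a) :=
  continuous_iff_continuousAt.2 fun x => (hBderiv ha hapos x).continuousAt

lemma hB0 : Bfun a 0 = 0 := by simp [Bfun]

lemma hB2pi (hnorm : (2 * Real.pi)⁻¹ * ∫ θ in (0:ℝ)..(2 * Real.pi), (a θ)⁻¹ = 1) :
    Bfun a (2 * Real.pi) = 2 * Real.pi := by
  have h2π : (2 * Real.pi) ≠ 0 := by positivity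
  rw [Bfun]
  rw [inv_mul_eq_one₀ h2π] at hnorm
  exact hnorm.symm

lemma hainv_per (haper : Function.Periodic a (2 * Real.pi)) :
    Function.Periodic (fun t => (a t)⁻¹) (2 * Real.pi) := fun θ => by simp [haper θ]

lemma hBadd (ha : Continuous a) (hapos : ∀ θ, 0 < a θ)
    (haper : Function.Periodic a (2 * Real.pi))
    (hnorm : (2 * Real.pi)⁻¹ * ∫ θ in (0:ℝ)..(2 * Real.pi), (a θ)⁻¹ = 1) (θ : ℝ) :
    Bfun a (θ + 2 * Real.pi) = Bfun a θ + 2 * Real.pi := by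
  have hc := ainv_cont ha hapos
  have h1 : Bfun a θ + ∫ t in θ..(θ + 2 * Real.pi), (a t)⁻¹ = Bfun a (θ + 2 * Real.pi) :=
    intervalIntegral.integral_add_adjacent_intervals (hc.intervalIntegrable _ _)
      (hc.intervalIntegrable _ _)
  have h2 : ∫ t in θ..(θ + 2 * Real.pi), (a t)⁻¹ = ∫ t in (0:ℝ)..(0 + 2 * Real.pi), (a t)⁻¹ :=
    (hainv_per haper).intervalIntegral_add_eq θ 0
  rw [zero_add] at h2
  rw [← h1, h2]
  have := hB2pi (a := a) hnorm
  rw [Bfun] at this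
  rw [this]

lemma hBsurj (ha : Continuous a) (hapos : ∀ θ, 0 < a θ)
    (haper : Function.Periodic a (2 * Real.pi))
    (hnorm : (2 * Real.pi)⁻¹ * ∫ θ in (0:ℝ)..(2 * Real.pi), (a θ)⁻¹ = 1) :
    Function.Surjective (Bfun a) := by
  have hadd := hBadd ha hapos haper hnorm
  have hsub : ∀ θ, Bfun a (θ - 2 * Real.pi) = Bfun a θ - 2 * Real.pi := by
    intro θ
    have := hadd (θ - 2 * Real.pi)
    rw [sub_add_cancel] at this
    linarith
  have hz : ∀ k : ℤ, Bfun a (2 * Real.pi * k) = 2 * Real.pi * k := by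
    intro k
    induction k using Int.induction_on with
    | zero => simpa using hB0 (a := a)
    | succ n ih =>
        have := hadd (2 * Real.pi * n)
        push_cast
        push_cast at ih
        rw [mul_add, mul_one, this, ih]
    | pred n ih =>
        have := hsub (2 * Real.pi * (-n : ℤ))
        push_cast
        push_cast at ih this
        rw [show 2 * Real.pi * (-↑n - 1) = 2 * Real.pi * (-↑n) - 2 * Real.pi by ring, this, ih]
  have hBcont : Continuous (Bfun a) :=
    continuous_iff_continuousAt.2 fun x => (hBderiv ha hapos x).continuousAt
  intro y
  obtain ⟨k, hk1, hk2⟩ : ∃ k : ℤ, 2 * Real.pi * k ≤ y ∧ y ≤ 2 * Real.pi * (k + 1) := by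
    have h2π : (0:ℝ) < 2 * Real.pi := by positivity
    refine ⟨⌊y / (2 * Real.pi)⌋, ?_, ?_⟩
    · rw [mul_comm]
      exact (le_div_iff₀ h2π).1 (Int.floor_le _)
    · rw [mul_comm]
      exact (div_le_iff₀ h2π).1 (Int.lt_floor_add_one _).le
  have hzk := hz k
  have hzk1 := hz (k + 1)
  push_cast at hzk1
  have hle : (2 * Real.pi * k : ℝ) ≤ 2 * Real.pi * (k + 1) := by nlinarith [Real.pi_pos]
  have hIcc : y ∈ Icc (Bfun a (2 * Real.pi * k)) (Bfun a (2 * Real.pi * (k + 1))) := by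
    rw [hzk, hzk1]; exact ⟨hk1, hk2⟩
  obtain ⟨x, _, hx⟩ := intermediate_value_Icc hle
    hBcont.continuousOn hIcc
  exact ⟨x, hx⟩

def Cfun (a : ℝ → ℝ) : ℝ → ℝ := Function.invFun (Bfun a)

lemma hCB (ha : Continuous a) (hapos : ∀ θ, 0 < a θ) (θ : ℝ) :
    Cfun a (Bfun a θ) = θ :=
  Function.leftInverse_invFun (hBsm ha hapos).injective θ

lemma hBC (ha : Continuous a) (hapos : ∀ θ, 0 < a θ)
    (haper : Function.Periodic a (2 * Real.pi))
    (hnorm : (2 * Real.pi)⁻¹ * ∫ θ in (0:ℝ)..(2 * Real.pi), (a θ)⁻¹ = 1) (s : ℝ) :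
    Bfun a (Cfun a s) = s :=
  Function.rightInverse_invFun (hBsurj ha hapos haper hnorm) s

lemma hCmono (ha : Continuous a) (hapos : ∀ θ, 0 < a θ)
    (haper : Function.Periodic a (2 * Real.pi))
    (hnorm : (2 * Real.pi)⁻¹ * ∫ θ in (0:ℝ)..(2 * Real.pi), (a θ)⁻¹ = 1) :
    StrictMono (Cfun a) := by
  intro s t hst
  by_contra h
  push_neg at h
  have := (hBsm ha hapos).monotone h
  rw [hBC ha hapos haper hnorm, hBC ha hapos haper hnorm] at this
  exact absurd this (not_le.2 hst)

lemma hCcont (ha : Continuous a) (hapos : ∀ θ, 0 < a θ)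
    (haper : Function.Periodic a (2 * Real.pi))
    (hnorm : (2 * Real.pi)⁻¹ * ∫ θ in (0:ℝ)..(2 * Real.pi), (a θ)⁻¹ = 1) :
    Continuous (Cfun a) := by
  have hsurj : Function.Surjective (Cfun a) := fun θ => ⟨Bfun a θ, hCB ha hapos θ⟩
  exact (hCmono ha hapos haper hnorm).monotone.continuous_of_denseRange
    hsurj.denseRange

lemma hC0 (ha : Continuous a) (hapos : ∀ θ, 0 < a θ) : Cfun a 0 = 0 := by
  have := hCB ha hapos 0
  rwa [hB0] at this

lemma hC2pi (ha : Continuous a) (hapos : ∀ θ, 0 < a θ)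
    (hnorm : (2 * Real.pi)⁻¹ * ∫ θ in (0:ℝ)..(2 * Real.pi), (a θ)⁻¹ = 1) :
    Cfun a (2 * Real.pi) = 2 * Real.pi := by
  have := hCB ha hapos (2 * Real.pi)
  rwa [hB2pi hnorm] at this

lemma himg (ha : Continuous a) (hapos : ∀ θ, 0 < a θ)
    (haper : Function.Periodic a (2 * Real.pi))
    (hnorm : (2 * Real.pi)⁻¹ * ∫ θ in (0:ℝ)..(2 * Real.pi), (a θ)⁻¹ = 1) :
    Bfun a '' Ioo 0 (2 * Real.pi) = Ioo 0 (2 * Real.pi) := by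
  ext s
  constructor
  · rintro ⟨θ, hθ, rfl⟩
    constructor
    · have := hBsm ha hapos hθ.1
      rwa [hB0] at this
    · have := hBsm ha hapos hθ.2
      rwa [hB2pi hnorm] at this
  · intro hs
    refine ⟨Cfun a s, ⟨?_, ?_⟩, hBC ha hapos haper hnorm s⟩
    · have := hCmono ha hapos haper hnorm hs.1
      rwa [hC0 ha hapos] at this
    · have := hCmono ha hapos haper hnorm hs.2
      rwa [hC2pi ha hapos hnorm] at this

lemma hchg (ha : Continuous a) (hapos : ∀ θ, 0 < a θ)
    (haper : Function.Periodic a (2 * Real.pi))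
    (hnorm : (2 * Real.pi)⁻¹ * ∫ θ in (0:ℝ)..(2 * Real.pi), (a θ)⁻¹ = 1)
    {F : Type*} [NormedAddCommGroup F] [NormedSpace ℝ F] (g : ℝ → F) :
    ∫ s in Ioo 0 (2 * Real.pi), g s
      = ∫ θ in Ioo 0 (2 * Real.pi), (a θ)⁻¹ • g (Bfun a θ) := by
  have h := integral_image_eq_integral_abs_deriv_smul (s := Ioo 0 (2 * Real.pi)) (f := Bfun a)
    (f' := fun θ => (a θ)⁻¹) measurableSet_Ioo
    (fun x _ => (hBderiv ha hapos x).hasDerivWithinAt)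
    ((hBsm ha hapos).injective.injOn) g
  rw [himg ha hapos haper hnorm] at h
  rw [h]
  refine setIntegral_congr_fun measurableSet_Ioo fun θ _ => ?_
  rw [abs_of_pos (inv_pos.2 (hapos θ))]

lemma hchgInt (ha : Continuous a) (hapos : ∀ θ, 0 < a θ)
    (haper : Function.Periodic a (2 * Real.pi))
    (hnorm : (2 * Real.pi)⁻¹ * ∫ θ in (0:ℝ)..(2 * Real.pi), (a θ)⁻¹ = 1)
    {F : Type*} [NormedAddCommGroup F] [NormedSpace ℝ F] (g : ℝ → F) :
    IntegrableOn g (Ioo 0 (2 * Real.pi))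
      ↔ IntegrableOn (fun θ => (a θ)⁻¹ • g (Bfun a θ)) (Ioo 0 (2 * Real.pi)) := by
  have h := integrableOn_image_iff_integrableOn_abs_deriv_smul (s := Ioo 0 (2 * Real.pi)) (f := Bfun a)
    (f' := fun θ => (a θ)⁻¹) measurableSet_Ioo
    (fun x _ => (hBderiv ha hapos x).hasDerivWithinAt)
    ((hBsm ha hapos).injective.injOn) g
  rw [himg ha hapos haper hnorm] at h
  rw [h]
  apply integrableOn_congr_fun _ measurableSet_Ioo
  intro θ _
  simp only []
  rw [abs_of_pos (inv_pos.2 (hapos θ))]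

lemma phi_pointwise (hapos : ∀ θ, 0 < a θ) (n m : ℤ) (θ : ℝ) :
    phiFun a n θ * (starRingEnd ℂ) (phiFun a m θ)
      = (a θ)⁻¹ • ((2 * Real.pi : ℂ)⁻¹
          * Complex.exp (Complex.I * (n - m) * Bfun a θ)) := by
  have hx : (0:ℝ) ≤ 2 * Real.pi * a θ :=
    mul_nonneg (by positivity) (hapos θ).le
  have h1 : (starRingEnd ℂ) (Complex.exp (Complex.I * m * (Bfun a θ : ℝ)))
      = Complex.exp (-(Complex.I * m * (Bfun a θ : ℝ))) := by
    rw [← Complex.exp_conj]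
    congr 1
    simp [map_mul, Complex.conj_I]
  set r : ℝ := (Real.sqrt (2 * Real.pi * a θ))⁻¹ with hr
  have h3 : Complex.exp (Complex.I * (n - m) * Bfun a θ)
      = Complex.exp (Complex.I * n * (Bfun a θ : ℝ))
        * Complex.exp (-(Complex.I * m * (Bfun a θ : ℝ))) := by
    rw [← Complex.exp_add]
    congr 1
    ring
  have h4 : (r : ℂ) * r = ((a θ)⁻¹ : ℝ) * (2 * Real.pi : ℂ)⁻¹ := by
    have : r * r = (2 * Real.pi * a θ)⁻¹ := by
      rw [hr, ← mul_inv, Real.mul_self_sqrt hx]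
    rw [← Complex.ofReal_mul, this]
    push_cast
    rw [mul_inv]
    ring
  rw [phiFun, phiFun, map_mul, Complex.conj_ofReal, h1, Complex.real_smul, h3]
  rw [show (Complex.I * ↑n * ↑(Bfun a θ)) = Complex.I * n * (Bfun a θ : ℝ) from rfl]
  calc (r : ℂ) * Complex.exp (Complex.I * n * (Bfun a θ : ℝ))
        * ((r : ℂ) * Complex.exp (-(Complex.I * m * (Bfun a θ : ℝ))))
      = ((r : ℂ) * r) * (Complex.exp (Complex.I * n * (Bfun a θ : ℝ))
          * Complex.exp (-(Complex.I * m * (Bfun a θ : ℝ)))) := by ring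
    _ = _ := by rw [h4]; ring
lemma orthoPart (ha : Continuous a) (hapos : ∀ θ, 0 < a θ)
    (hnorm : (2 * Real.pi)⁻¹ * ∫ θ in (0:ℝ)..(2 * Real.pi), (a θ)⁻¹ = 1) (n m : ℤ) :
    (∫ θ in (0:ℝ)..(2 * Real.pi), phiFun a n θ * (starRingEnd ℂ) (phiFun a m θ))
      = if n = m then 1 else 0 := by
  set g : ℝ → ℂ := fun s => (2 * Real.pi : ℂ)⁻¹ * Complex.exp (Complex.I * (n - m) * s) with hg
  have hgc : Continuous g := by
    apply continuous_const.mul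
    exact Complex.continuous_exp.comp (by continuity)
  have key : (∫ x in (0:ℝ)..(2 * Real.pi), (a x)⁻¹ • (g ∘ Bfun a) x)
      = ∫ x in (Bfun a 0)..(Bfun a (2 * Real.pi)), g x :=
    intervalIntegral.integral_comp_smul_deriv
      (fun x _ => hBderiv ha hapos x) ((ainv_cont ha hapos).continuousOn) hgc
  rw [hB0, hB2pi hnorm] at key
  have hcongr : (∫ θ in (0:ℝ)..(2 * Real.pi), phiFun a n θ * (starRingEnd ℂ) (phiFun a m θ))
      = ∫ x in (0:ℝ)..(2 * Real.pi), (a x)⁻¹ • (g ∘ Bfun a) x :=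
    intervalIntegral.integral_congr fun θ _ => phi_pointwise hapos n m θ
  rw [hcongr, key]
  by_cases hnm : n = m
  · subst hnm
    simp only [hg, sub_self, mul_zero, zero_mul, Complex.exp_zero, mul_one, if_pos rfl]
    rw [intervalIntegral.integral_const, sub_zero, Complex.real_smul]
    have h2pi : (2 * (Real.pi : ℂ)) ≠ 0 := by
      simp [Complex.ofReal_ne_zero, Real.pi_ne_zero]
    push_cast
    rw [mul_inv_cancel₀ h2pi]
  · rw [if_neg hnm]
    have hc : (Complex.I * (n - m)) ≠ 0 := by
      apply mul_ne_zero Complex.I_ne_zero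
      intro h
      apply hnm
      have : ((n - m : ℤ) : ℂ) = 0 := by push_cast; rw [← h]
      exact_mod_cast sub_eq_zero.1 (by exact_mod_cast this)
    have : (∫ x in (0:ℝ)..(2 * Real.pi), g x)
        = (2 * Real.pi : ℂ)⁻¹ * ∫ x in (0:ℝ)..(2 * Real.pi),
            Complex.exp ((Complex.I * (n - m)) * x) := by
      rw [← intervalIntegral.integral_const_mul]
    rw [this, integral_exp_mul_complex hc]
    rw [Complex.ofReal_zero, mul_zero, Complex.exp_zero]
    push_cast
    have he : Complex.exp (Complex.I * (↑n - ↑m) * (2 * Real.pi)) = 1 := by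
      have := Complex.exp_int_mul_two_pi_mul_I (n - m)
      rw [← this]
      congr 1
      push_cast
      ring
    rw [he]
    simp

lemma extend_per (u : ℝ → ℂ) (huper : Function.Periodic u (2 * Real.pi))
    (h : ∀ᵐ θ : ℝ ∂volume, θ ∈ Ioo 0 (2 * Real.pi) → u θ = 0) :
    ∀ᵐ θ : ℝ ∂volume, u θ = 0 := by
  have h2π : (0:ℝ) < 2 * Real.pi := by positivity
  have hk : ∀ k : ℤ, ∀ᵐ θ : ℝ ∂volume,
      θ - 2 * Real.pi * k ∈ Ioo 0 (2 * Real.pi) → u θ = 0 := by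
    intro k
    have hmp : MeasurePreserving (fun θ : ℝ => θ - 2 * Real.pi * k) volume volume :=
      measurePreserving_sub_right volume _
    have := hmp.quasiMeasurePreserving.tendsto_ae.eventually h
    filter_upwards [this] with θ hθ hmem
    have h0 := hθ hmem
    have : u (θ - (k : ℝ) * (2 * Real.pi)) = u θ := huper.sub_int_mul_eq k
    rw [show θ - 2 * Real.pi * (k:ℝ) = θ - (k:ℝ) * (2 * Real.pi) by ring] at h0
    rwa [this] at h0
  have hnull : ∀ᵐ θ : ℝ ∂volume, θ ∉ Set.range (fun k : ℤ => 2 * Real.pi * k) :=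
    measure_eq_zero_iff_ae_notMem.1 ((Set.countable_range _).measure_zero _)
  filter_upwards [ae_all_iff.2 hk, hnull] with θ hθ hθ2
  set k := ⌊θ / (2 * Real.pi)⌋ with hkdef
  apply hθ k
  have h1 : 2 * Real.pi * k ≤ θ := by
    rw [mul_comm]; exact (le_div_iff₀ h2π).1 (Int.floor_le _)
  have h2 : θ ≤ 2 * Real.pi * (k + 1) := by
    rw [mul_comm]; exact (div_le_iff₀ h2π).1 (Int.lt_floor_add_one _).le
  constructor
  · rcases lt_or_eq_of_le h1 with h | h
    · linarith
    · exact (hθ2 ⟨k, h⟩).elim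
  · rcases lt_or_eq_of_le h2 with h | h
    · push_cast at h ⊢; linarith
    · exact (hθ2 ⟨k + 1, by push_cast; push_cast at h; linarith⟩).elim

lemma conj_phi (n : ℤ) (θ : ℝ) :
    (starRingEnd ℂ) (phiFun a n θ)
      = (((Real.sqrt (2 * Real.pi * a θ))⁻¹ : ℝ) : ℂ)
        * Complex.exp (-(Complex.I * n * (Bfun a θ : ℝ))) := by
  rw [phiFun, map_mul, Complex.conj_ofReal, ← Complex.exp_conj]
  congr 2
  simp [map_mul, Complex.conj_I]

lemma completePart (ha : Continuous a) (hapos : ∀ θ, 0 < a θ)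
    (haper : Function.Periodic a (2 * Real.pi))
    (hnorm : (2 * Real.pi)⁻¹ * ∫ θ in (0:ℝ)..(2 * Real.pi), (a θ)⁻¹ = 1)
    (u : ℝ → ℂ) (hum : AEStronglyMeasurable u volume)
    (huper : Function.Periodic u (2 * Real.pi))
    (huint : IntervalIntegrable (fun θ => ‖u θ‖ ^ 2) volume 0 (2 * Real.pi))
    (horth : ∀ n : ℤ,
      (∫ θ in (0:ℝ)..(2 * Real.pi), u θ * (starRingEnd ℂ) (phiFun a n θ)) = 0) :
    ∀ᵐ θ : ℝ ∂volume, u θ = 0 := by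
  haveI : Fact (0 < 2 * Real.pi) := ⟨by positivity⟩
  have h2π : (0:ℝ) < 2 * Real.pi := by positivity
  set ut : ℝ → ℂ := hum.mk u with hut
  have hutm : StronglyMeasurable ut := hum.stronglyMeasurable_mk
  have huae : u =ᵐ[volume] ut := hum.ae_eq_mk
  -- the transferred orthogonality
  have horth' : ∀ n : ℤ,
      (∫ θ in (0:ℝ)..(2 * Real.pi), ut θ * (starRingEnd ℂ) (phiFun a n θ)) = 0 := by
    intro n
    rw [← horth n]
    apply intervalIntegral.integral_congr_ae
    filter_upwards [huae] with θ hθ _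
    rw [hθ]
  -- transferred square-integrability
  have huint' : IntegrableOn (fun θ => ‖ut θ‖ ^ 2) (Ioo 0 (2 * Real.pi)) volume := by
    have h1 : IntegrableOn (fun θ => ‖u θ‖ ^ 2) (Ioo 0 (2 * Real.pi)) volume := by
      have := (intervalIntegrable_iff_integrableOn_Ioo_of_le h2π.le).1 huint
      exact this
    apply h1.congr
    apply ae_restrict_of_ae
    filter_upwards [huae] with θ hθ
    rw [hθ]
  -- the conjugated function on the Fourier side
  set v : ℝ → ℂ := fun s => ut (Cfun a s) * (Real.sqrt (a (Cfun a s)) : ℂ) with hv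
  have hCc : Continuous (Cfun a) := hCcont ha hapos haper hnorm
  have hvm : StronglyMeasurable v := by
    apply StronglyMeasurable.mul
    · exact hutm.comp_measurable hCc.measurable
    · exact (Complex.continuous_ofReal.comp
        ((Real.continuous_sqrt.comp ha).comp hCc)).stronglyMeasurable
  have hvB : ∀ θ, v (Bfun a θ) = ut θ * (Real.sqrt (a θ) : ℂ) := by
    intro θ
    rw [hv]
    simp only [hCB ha hapos θ]
  -- square integrability of v
  have hv2 : IntegrableOn (fun s => ‖v s‖ ^ 2) (Ioo 0 (2 * Real.pi)) volume := by
    rw [hchgInt ha hapos haper hnorm]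
    apply huint'.congr
    apply ae_restrict_of_ae
    apply Filter.Eventually.of_forall
    intro θ
    simp only [hvB θ, smul_eq_mul]
    rw [norm_mul, mul_pow, Complex.norm_real, Real.norm_eq_abs,
      abs_of_nonneg (Real.sqrt_nonneg _), Real.sq_sqrt (hapos θ).le]
    rw [inv_mul_eq_div, mul_div_assoc, div_self (hapos θ).ne', mul_one]
  -- v is L² on (0, 2π]
  have hvIoc : IntegrableOn (fun s => ‖v s‖ ^ 2) (Ioc 0 (2 * Real.pi)) volume := by
    rwa [integrableOn_Ioc_iff_integrableOn_Ioo]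
  have hvL2 : MemLp v 2 (volume.restrict (Ioc 0 (2 * Real.pi))) := by
    rw [memLp_two_iff_integrable_sq_norm (hvm.aestronglyMeasurable)]
    exact hvIoc
  -- lift to the circle
  set F : AddCircle (2 * Real.pi) → ℂ := AddCircle.liftIoc (2 * Real.pi) 0 v with hF
  have hFm : StronglyMeasurable F := by
    have : F = fun x => v ((AddCircle.measurableEquivIoc (2 * Real.pi) 0 x : ℝ)) := rfl
    rw [this]
    exact hvm.comp_measurable
      (measurable_subtype_coe.comp (AddCircle.measurableEquivIoc (2 * Real.pi) 0).measurable)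
  have hmk := AddCircle.measurePreserving_mk (2 * Real.pi) 0
  have hFv : ∀ᵐ x ∂(volume.restrict (Ioc (0:ℝ) (0 + 2 * Real.pi))),
      F ((x : ℝ) : AddCircle (2 * Real.pi)) = v x := by
    filter_upwards [ae_restrict_mem measurableSet_Ioc] with x hx
    exact AddCircle.liftIoc_coe_apply hx
  have hFL2 : MemLp F 2 (AddCircle.haarAddCircle) := by
    have hvol : MemLp F 2 (volume : Measure (AddCircle (2 * Real.pi))) := by
      refine ⟨hFm.aestronglyMeasurable, ?_⟩
      rw [← eLpNorm_comp_measurePreserving hFm.aestronglyMeasurable hmk]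
      have : eLpNorm (F ∘ (fun x : ℝ => (x : AddCircle (2 * Real.pi)))) 2
          (volume.restrict (Ioc (0:ℝ) (0 + 2 * Real.pi)))
          = eLpNorm v 2 (volume.restrict (Ioc (0:ℝ) (0 + 2 * Real.pi))) :=
        eLpNorm_congr_ae hFv
      rw [this]
      rw [zero_add]
      exact hvL2.2
    have : AddCircle.haarAddCircle
        = (ENNReal.ofReal (2 * Real.pi))⁻¹ • (volume : Measure (AddCircle (2 * Real.pi))) := by
      rw [AddCircle.volume_eq_smul_haarAddCircle, ← smul_assoc, smul_eq_mul,
        ENNReal.inv_mul_cancel (by simp [h2π, Real.pi_pos]) ENNReal.ofReal_ne_top, one_smul]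
    rw [this]
    exact hvol.smul_measure (by simp [Real.pi_pos])
  -- Fourier coefficients of F vanish
  have hfc : ∀ n : ℤ, fourierCoeff F n = 0 := by
    intro n
    rw [hF, fourierCoeff_liftIoc_eq, fourierCoeffOn_eq_integral]
    set g : ℝ → ℂ := fun s => Complex.exp (-(Complex.I * n * s)) * v s with hg
    have h2πc : ((2 * Real.pi : ℝ) : ℂ) ≠ 0 := by
      simp [Real.pi_ne_zero]
    have hgeq : ∀ x : ℝ,
        (fourier (-n) (x : AddCircle (0 + 2 * Real.pi - 0)) : ℂ) • v x = g x := by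
      intro x
      rw [smul_eq_mul, hg, fourier_coe_apply]
      rw [show (0 + 2 * Real.pi - 0 : ℝ) = 2 * Real.pi by ring]
      congr 2
      push_cast
      rw [div_eq_iff (by simp [Real.pi_ne_zero] : (2 * (Real.pi:ℂ)) ≠ 0)]
      ring
    have hint0 : (∫ x in (0:ℝ)..(0 + 2 * Real.pi), (fourier (-n)
        (x : AddCircle (0 + 2 * Real.pi - 0)) : ℂ) • v x) = 0 := by
      rw [intervalIntegral.integral_congr (fun x _ => hgeq x)]
      rw [zero_add, intervalIntegral.integral_of_le h2π.le,
        MeasureTheory.integral_Ioc_eq_integral_Ioo]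
      rw [hchg ha hapos haper hnorm g]
      have hpt : ∀ θ : ℝ, ((a θ)⁻¹ : ℝ) • g (Bfun a θ)
          = ((Real.sqrt (2 * Real.pi) : ℝ) : ℂ)
            * (ut θ * (starRingEnd ℂ) (phiFun a n θ)) := by
        intro θ
        have hsa : Real.sqrt (a θ) ≠ 0 := (Real.sqrt_pos.2 (hapos θ)).ne'
        have hs2 : Real.sqrt (2 * Real.pi) ≠ 0 := (Real.sqrt_pos.2 h2π).ne'
        have hreal : (a θ)⁻¹ * Real.sqrt (a θ)
            = Real.sqrt (2 * Real.pi) * (Real.sqrt (2 * Real.pi * a θ))⁻¹ := by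
          rw [Real.sqrt_mul h2π.le (a θ), mul_inv]
          rw [show (a θ) = Real.sqrt (a θ) * Real.sqrt (a θ) from
            (Real.mul_self_sqrt (hapos θ).le).symm]
          field_simp
          rw [Real.sqrt_sq (Real.sqrt_nonneg _)]
        have hrealc := congrArg (fun x : ℝ => (x : ℂ)) hreal
        push_cast at hrealc
        rw [Complex.real_smul, hg]
        simp only [hvB θ]
        rw [conj_phi n θ]
        push_cast
        linear_combination (Complex.exp (-(Complex.I * n * (Bfun a θ : ℝ))) * ut θ) * hrealc
      rw [setIntegral_congr_fun measurableSet_Ioo (fun θ _ => hpt θ)]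
      rw [MeasureTheory.integral_const_mul]
      have horthn := horth' n
      rw [intervalIntegral.integral_of_le h2π.le,
        MeasureTheory.integral_Ioc_eq_integral_Ioo] at horthn
      rw [horthn, mul_zero]
    rw [hint0, smul_zero]
  -- conclude F = 0 a.e.
  have hcoe : ∀ n : ℤ, fourierCoeff (⇑(hFL2.toLp F)) n = fourierCoeff F n := by
    intro n
    simp only [fourierCoeff]
    apply integral_congr_ae
    filter_upwards [hFL2.coeFn_toLp] with t ht
    rw [ht]
  have hrepr : fourierBasis.repr (hFL2.toLp F) = 0 := by
    ext n
    rw [fourierBasis_repr, hcoe n, hfc n]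
    rfl
  have hf0 : hFL2.toLp F = 0 := (LinearIsometryEquiv.map_eq_zero_iff _).1 hrepr
  have hFae : F =ᵐ[AddCircle.haarAddCircle] 0 := by
    have h1 := hFL2.coeFn_toLp
    rw [hf0] at h1
    exact h1.symm.trans (Lp.coeFn_zero ℂ 2 _)
  have hvol0 : F =ᵐ[(volume : Measure (AddCircle (2 * Real.pi)))] 0 := by
    rw [AddCircle.volume_eq_smul_haarAddCircle]
    exact Measure.ae_smul_measure hFae _
  have hv0 : ∀ᵐ s ∂(volume.restrict (Ioc (0:ℝ) (0 + 2 * Real.pi))), v s = 0 := by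
    have h1 := hmk.quasiMeasurePreserving.tendsto_ae.eventually hvol0
    filter_upwards [h1, hFv] with x hx hx2
    rw [← hx2]
    exact hx
  -- the exceptional set
  set N : Set ℝ := Ioo 0 (2 * Real.pi) ∩ {s | v s ≠ 0} with hN
  have hNmeas : MeasurableSet N :=
    measurableSet_Ioo.inter ((hvm.measurable (measurableSet_singleton 0).compl))
  have hNnull : volume N = 0 := by
    rw [ae_restrict_iff' measurableSet_Ioc] at hv0
    rw [measure_eq_zero_iff_ae_notMem]
    filter_upwards [hv0] with s hs
    rintro ⟨hs1, hs2⟩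
    exact hs2 (hs ⟨hs1.1, by rw [zero_add]; exact hs1.2.le⟩)
  -- the indicator trick: transfer nullity through B
  set g2 : ℝ → ℝ := N.indicator (fun _ => (1:ℝ)) with hg2
  have hg2m : Measurable g2 := measurable_const.indicator hNmeas
  have hg20 : ∀ᵐ s : ℝ ∂volume, g2 s = 0 := by
    rw [ae_iff]
    refine measure_mono_null ?_ hNnull
    intro s hs
    by_contra h
    exact hs (by rw [hg2, Set.indicator_of_notMem h])
  have hInt0 : (∫ s in Ioo 0 (2 * Real.pi), g2 s) = 0 :=
    integral_eq_zero_of_ae (ae_restrict_of_ae hg20)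
  have hrhs0 : (∫ θ in Ioo 0 (2 * Real.pi), (a θ)⁻¹ • g2 (Bfun a θ)) = 0 := by
    rw [← hchg ha hapos haper hnorm g2]
    exact hInt0
  obtain ⟨M, hM⟩ := isCompact_Icc.exists_bound_of_continuousOn
    (s := Icc (0:ℝ) (2 * Real.pi)) ((ainv_cont ha hapos).continuousOn)
  have hBc := hBcont ha hapos
  have hInteg : IntegrableOn (fun θ => (a θ)⁻¹ • g2 (Bfun a θ)) (Ioo 0 (2 * Real.pi)) volume := by
    apply Integrable.mono' (g := fun _ => M)
    · exact integrableOn_const measure_Ioo_lt_top.ne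
    · exact ((ainv_cont ha hapos).measurable.smul
        (hg2m.comp hBc.measurable)).aestronglyMeasurable
    · filter_upwards [ae_restrict_mem measurableSet_Ioo] with θ hθ
      have h1 : ‖(a θ)⁻¹‖ ≤ M := hM θ ⟨hθ.1.le, hθ.2.le⟩
      have h2 : ‖g2 (Bfun a θ)‖ ≤ 1 := by
        rw [hg2, Real.norm_eq_abs]
        rcases Set.indicator_eq_zero_or_self N (fun _ => (1:ℝ)) (Bfun a θ) with h | h
        · rw [h]; simp
        · rw [h]; simp
      calc ‖(a θ)⁻¹ • g2 (Bfun a θ)‖ = ‖(a θ)⁻¹‖ * ‖g2 (Bfun a θ)‖ := norm_smul _ _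
        _ ≤ M * 1 := by
            apply mul_le_mul h1 h2 (norm_nonneg _)
            exact le_trans (norm_nonneg _) h1
        _ = M := mul_one M
  have hae0 : ∀ᵐ θ ∂volume.restrict (Ioo 0 (2 * Real.pi)), (a θ)⁻¹ • g2 (Bfun a θ) = 0 := by
    have hnn : 0 ≤ fun θ => (a θ)⁻¹ • g2 (Bfun a θ) := by
      intro θ
      simp only [smul_eq_mul, Pi.zero_apply]
      apply mul_nonneg (inv_pos.2 (hapos θ)).le
      rw [hg2]
      exact Set.indicator_nonneg (fun _ _ => zero_le_one) _
    exact (integral_eq_zero_iff_of_nonneg hnn hInteg).1 hrhs0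
  have hut0 : ∀ᵐ θ ∂volume.restrict (Ioo 0 (2 * Real.pi)), ut θ = 0 := by
    filter_upwards [hae0, ae_restrict_mem measurableSet_Ioo] with θ h0 hmem
    have hg2B : g2 (Bfun a θ) = 0 := by
      rw [smul_eq_mul] at h0
      rcases mul_eq_zero.1 h0 with h | h
      · exact absurd h (inv_pos.2 (hapos θ)).ne'
      · exact h
    by_contra hne
    have hBmem : Bfun a θ ∈ Ioo 0 (2 * Real.pi) := by
      constructor
      · have := hBsm ha hapos hmem.1; rwa [hB0] at this
      · have := hBsm ha hapos hmem.2; rwa [hB2pi hnorm] at this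
    have hmemN : Bfun a θ ∈ N := by
      refine ⟨hBmem, ?_⟩
      rw [Set.mem_setOf_eq, hvB θ]
      exact mul_ne_zero hne (Complex.ofReal_ne_zero.2 (Real.sqrt_pos.2 (hapos θ)).ne')
    rw [hg2, Set.indicator_of_mem hmemN] at hg2B
    exact one_ne_zero hg2B
  have hu0 : ∀ᵐ θ ∂volume.restrict (Ioo 0 (2 * Real.pi)), u θ = 0 := by
    filter_upwards [hut0, ae_restrict_of_ae huae] with θ h1 h2
    rw [h2]
    exact h1
  exact extend_per u huper (ae_imp_of_ae_restrict hu0)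

/-- **Part of Lemma 2.1 of the paper.** For `a` smooth, `2π`-periodic, positive and
normalized by `(1/2π)∫₀^{2π} a⁻¹ = 1`, the family `{φₙ}` is an orthonormal basis of the
`L²`-space of `2π`-periodic functions: the `φₙ` are orthonormal, and any square-integrable
`2π`-periodic function orthogonal to all of them vanishes almost everywhere. -/
theorem phiFun_orthonormal_basis
    (a : ℝ → ℝ) (ha : ContDiff ℝ (⊤ : ℕ∞) a) (haper : Function.Periodic a (2 * Real.pi))
    (hapos : ∀ θ, 0 < a θ)
    (hnorm : (2 * Real.pi)⁻¹ * ∫ θ in (0:ℝ)..(2 * Real.pi), (a θ)⁻¹ = 1) :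
    (∀ n m : ℤ,
      (∫ θ in (0:ℝ)..(2 * Real.pi), phiFun a n θ * (starRingEnd ℂ) (phiFun a m θ)) =
        if n = m then 1 else 0) ∧
    ∀ u : ℝ → ℂ, AEStronglyMeasurable u volume → Function.Periodic u (2 * Real.pi) →
      IntervalIntegrable (fun θ => ‖u θ‖ ^ 2) volume 0 (2 * Real.pi) →
      (∀ n : ℤ, (∫ θ in (0:ℝ)..(2 * Real.pi), u θ * (starRingEnd ℂ) (phiFun a n θ)) = 0) →
      ∀ᵐ θ : ℝ ∂volume, u θ = 0 := by
  constructor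
  · exact fun n m => orthoPart ha.continuous hapos hnorm n m
  · exact fun u hum huper huint horth =>
      completePart ha.continuous hapos haper hnorm u hum huper huint horth

end
end

section
/- Let a : ℝ → ℝ be a C^∞, 2π-periodic, strictly positive function with (1/2π)∫₀^{2π} a(θ)^{−1}dθ = 1 and B(θ) = ∫₀^θ a(t)^{−1}dt. For n ∈ ℤ let ψₙ(θ) = e^{inB(θ)} (a smooth 2π-periodic function) with Fourier coefficients ψ̂ₙ(k) = (1/2π)∫₀^{2π} ψₙ(θ)e^{−ikθ}dθ. Then for every n ∈ ℤ the series ∑_{k∈ℤ} |k|·|ψ̂ₙ(k)|² converges and ∑_{k∈ℤ} |k|·|ψ̂ₙ(k)|² ≥ |n|. -/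
open MeasureTheory Real

noncomputable section

namespace QFLB

open Set AddCircle

local instance : Fact (0 < 2 * Real.pi) := ⟨by positivity⟩

lemma lift_continuous {u : ℝ → ℂ} (hu : Continuous u)
    (hper : Function.Periodic u (2 * Real.pi)) :
    Continuous (hper.lift : AddCircle (2 * Real.pi) → ℂ) :=
  hu.quotient_liftOn' _

lemma fourierCoeff_lift {u : ℝ → ℂ}
    (hper : Function.Periodic u (2 * Real.pi)) (k : ℤ) :
    fourierCoeff (hper.lift : AddCircle (2 * Real.pi) → ℂ) k = fCoef u k := by
  rw [fourierCoeff_eq_intervalIntegral _ k 0, zero_add, Complex.real_smul, one_div, fCoef]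
  congr 1
  apply intervalIntegral.integral_congr
  intro x _
  simp only []
  rw [fourier_coe_apply, Function.Periodic.lift_coe, smul_eq_mul, mul_comm]
  congr 2
  have hpi : ((Real.pi : ℂ)) ≠ 0 := Complex.ofReal_ne_zero.mpr Real.pi_ne_zero
  push_cast
  field_simp

lemma fCoef_deriv {u u' : ℝ → ℂ} (hu : Continuous u) (hu' : Continuous u')
    (hd : ∀ x, HasDerivAt u (u' x) x) (hper : Function.Periodic u (2 * Real.pi)) (k : ℤ) :
    fCoef u' k = Complex.I * k * fCoef u k := by
  set e : ℝ → ℂ := fun x : ℝ => Complex.exp (-Complex.I * k * x) with he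
  have hek : ∀ x : ℝ, HasDerivAt e (-Complex.I * k * e x) x := by
    intro x
    have h0 : HasDerivAt (fun x : ℝ => ((x : ℂ))) 1 x := (hasDerivAt_id x).ofReal_comp
    have h1 := (h0.const_mul (-Complex.I * (k:ℂ))).cexp
    have h2 : -Complex.I * k * e x
        = Complex.exp (-Complex.I * (k:ℂ) * x) * (-Complex.I * (k:ℂ) * 1) := by
      rw [he]; ring
    rw [h2]; exact h1
  have hec : Continuous e :=
    Complex.continuous_exp.comp (continuous_const.mul Complex.continuous_ofReal)
  have ibp := intervalIntegral.integral_deriv_mul_eq_sub_of_hasDerivAt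
    (u := u) (v := e) (u' := u') (v' := fun x => -Complex.I * k * e x)
    (a := 0) (b := 2 * Real.pi)
    hu.continuousOn hec.continuousOn (fun x _ => hd x) (fun x _ => hek x)
    (hu'.intervalIntegrable _ _)
    ((continuous_const.mul hec).intervalIntegrable _ _)
  have he2π : e (2 * Real.pi) = 1 := by
    have harg : -Complex.I * (k:ℂ) * ((2 * Real.pi : ℝ) : ℂ)
        = ((-k : ℤ) : ℂ) * (2 * Real.pi * Complex.I) := by push_cast; ring
    rw [he]
    show Complex.exp _ = 1
    rw [harg, Complex.exp_int_mul_two_pi_mul_I]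
  have he0 : e 0 = 1 := by simp [he]
  have hu2π : u (2 * Real.pi) = u 0 := by simpa using hper 0
  have hrhs : u (2 * Real.pi) * e (2 * Real.pi) - u 0 * e 0 = 0 := by
    rw [he2π, he0, hu2π]; ring
  rw [hrhs] at ibp
  have hsplit : ∫ x in (0:ℝ)..(2 * Real.pi), (u' x * e x + u x * (-Complex.I * k * e x))
      = (∫ x in (0:ℝ)..(2 * Real.pi), u' x * e x)
        + ∫ x in (0:ℝ)..(2 * Real.pi), u x * (-Complex.I * k * e x) := by
    apply intervalIntegral.integral_add
    · exact (hu'.mul hec).intervalIntegrable _ _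
    · exact (hu.mul (continuous_const.mul hec)).intervalIntegrable _ _
  rw [hsplit] at ibp
  have h4 : ∫ x in (0:ℝ)..(2 * Real.pi), u x * (-Complex.I * k * e x)
      = -Complex.I * k * ∫ x in (0:ℝ)..(2 * Real.pi), u x * e x := by
    rw [← intervalIntegral.integral_const_mul]
    apply intervalIntegral.integral_congr
    intro x _; ring
  rw [h4] at ibp
  have h5 : (∫ x in (0:ℝ)..(2 * Real.pi), u' x * e x)
      = Complex.I * k * ∫ x in (0:ℝ)..(2 * Real.pi), u x * e x := by
    linear_combination ibp
  rw [fCoef, fCoef]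
  have e1 : (∫ θ in (0:ℝ)..(2 * Real.pi), u' θ * Complex.exp (-Complex.I * k * θ))
      = ∫ x in (0:ℝ)..(2 * Real.pi), u' x * e x := rfl
  have e2 : (∫ θ in (0:ℝ)..(2 * Real.pi), u θ * Complex.exp (-Complex.I * k * θ))
      = ∫ x in (0:ℝ)..(2 * Real.pi), u x * e x := rfl
  rw [e1, e2, h5]
  ring

lemma haar_integral_eq (f : AddCircle (2 * Real.pi) → ℂ) :
    ∫ z, f z ∂haarAddCircle
      = ((2 * Real.pi)⁻¹ : ℝ) • ∫ x in Set.Ioc (0:ℝ) (2 * Real.pi), f ↑x := by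
  have h1 := AddCircle.integral_preimage (2 * Real.pi) 0 f
  rw [zero_add] at h1
  have h2 : ∫ z, f z ∂(volume : Measure (AddCircle (2 * Real.pi)))
      = (2 * Real.pi) • ∫ z, f z ∂haarAddCircle := by
    rw [AddCircle.volume_eq_smul_haarAddCircle, integral_smul_measure,
      ENNReal.toReal_ofReal (by positivity)]
  rw [← h1] at h2
  rw [h2, smul_smul, inv_mul_cancel₀ (by positivity : (2 * Real.pi) ≠ 0), one_smul]

lemma hasSum_conj_mul {u v : ℝ → ℂ} (hu : Continuous u) (hv : Continuous v)
    (hpu : Function.Periodic u (2 * Real.pi)) (hpv : Function.Periodic v (2 * Real.pi)) :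
    HasSum (fun k : ℤ => (starRingEnd ℂ) (fCoef u k) * fCoef v k)
      (((2 * Real.pi)⁻¹ : ℝ) •
        ∫ x in Set.Ioc (0:ℝ) (2 * Real.pi), (starRingEnd ℂ) (u x) * v x) := by
  set F₀ : C(AddCircle (2 * Real.pi), ℂ) := ⟨hpu.lift, lift_continuous hu hpu⟩ with hF₀
  set G₀ : C(AddCircle (2 * Real.pi), ℂ) := ⟨hpv.lift, lift_continuous hv hpv⟩ with hG₀
  set F := ContinuousMap.toLp (E := ℂ) 2 haarAddCircle ℂ F₀ with hF
  set G := ContinuousMap.toLp (E := ℂ) 2 haarAddCircle ℂ G₀ with hG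
  have h := fourierBasis.hasSum_inner_mul_inner F G
  have hterm : ∀ i : ℤ, (inner ℂ (F : Lp ℂ 2 haarAddCircle) (fourierBasis i) : ℂ)
      * inner ℂ (fourierBasis i : Lp ℂ 2 haarAddCircle) G
      = (starRingEnd ℂ) (fCoef u i) * fCoef v i := by
    intro i
    have hFi : (inner ℂ (fourierBasis i : Lp ℂ 2 haarAddCircle) F : ℂ) = fCoef u i := by
      rw [← fourierBasis.repr_apply_apply, fourierBasis_repr, hF, fourierCoeff_toLp,
        hF₀, ContinuousMap.coe_mk, fourierCoeff_lift]
    have hGi : (inner ℂ (fourierBasis i : Lp ℂ 2 haarAddCircle) G : ℂ) = fCoef v i := by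
      rw [← fourierBasis.repr_apply_apply, fourierBasis_repr, hG, fourierCoeff_toLp,
        hG₀, ContinuousMap.coe_mk, fourierCoeff_lift]
    rw [← hFi, ← hGi, inner_conj_symm]
  have hinner : (inner ℂ (F : Lp ℂ 2 haarAddCircle) G : ℂ)
      = ((2 * Real.pi)⁻¹ : ℝ) •
        ∫ x in Set.Ioc (0:ℝ) (2 * Real.pi), (starRingEnd ℂ) (u x) * v x := by
    rw [hF, hG, ContinuousMap.inner_toLp]
    rw [show (∫ z, G₀ z * (starRingEnd ℂ) (F₀ z) ∂haarAddCircle)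
        = ∫ z, (starRingEnd ℂ) (F₀ z) * G₀ z ∂haarAddCircle from
      integral_congr_ae (ae_of_all _ fun z => mul_comm _ _)]
    rw [haar_integral_eq (fun z => (starRingEnd ℂ) (F₀ z) * G₀ z)]
    rfl
  rw [hinner] at h
  exact h.congr_fun fun i => (hterm i).symm

end QFLB

open QFLB Set

/-- **Inequality (2.6) of the paper.** For `a` smooth, `2π`-periodic, positive and normalized
by `(1/2π)∫₀^{2π} a⁻¹ = 1`, and `ψₙ(θ) = e^{inB(θ)}`, the series `∑ₖ |k| |ψ̂ₙ(k)|²`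
converges and is at least `|n|`. -/
theorem quadratic_form_lower_bound
    (a : ℝ → ℝ) (ha : ContDiff ℝ (⊤ : ℕ∞) a) (haper : Function.Periodic a (2 * Real.pi))
    (hapos : ∀ θ, 0 < a θ)
    (hnorm : (2 * Real.pi)⁻¹ * ∫ θ in (0:ℝ)..(2 * Real.pi), (a θ)⁻¹ = 1) :
    ∀ n : ℤ,
      Summable (fun k : ℤ =>
        |(k : ℝ)| * ‖fCoef (fun θ => Complex.exp (Complex.I * n * Bfun a θ)) k‖ ^ 2) ∧
      |(n : ℝ)| ≤ ∑' k : ℤ,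
        |(k : ℝ)| * ‖fCoef (fun θ => Complex.exp (Complex.I * n * Bfun a θ)) k‖ ^ 2 := by
  intro n
  haveI : Fact (0 < 2 * Real.pi) := ⟨by positivity⟩
  have hpi2 : (0:ℝ) < 2 * Real.pi := by positivity
  have hinv_cont : Continuous fun t => (a t)⁻¹ :=
    ha.continuous.inv₀ fun t => (hapos t).ne'
  have hinv_per : Function.Periodic (fun t => (a t)⁻¹) (2 * Real.pi) := fun t => by
    simp [haper t]
  have hItot : ∫ t in (0:ℝ)..(2 * Real.pi), (a t)⁻¹ = 2 * Real.pi := by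
    have h := hnorm
    field_simp at h
    simp only [one_div] at h
    linarith
  have hB : ∀ θ, HasDerivAt (Bfun a) (a θ)⁻¹ θ := by
    intro θ
    have h := (hinv_cont.integral_hasStrictDerivAt 0 θ).hasDerivAt
    exact h
  have hBc : Continuous (Bfun a) :=
    continuous_iff_continuousAt.2 fun θ => (hB θ).continuousAt
  have hBper : ∀ θ, Bfun a (θ + 2 * Real.pi) = Bfun a θ + 2 * Real.pi := by
    intro θ
    have hsplit := intervalIntegral.integral_add_adjacent_intervals
      (hinv_cont.intervalIntegrable (μ := volume) 0 θ)
      (hinv_cont.intervalIntegrable (μ := volume) θ (θ + 2 * Real.pi))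
    have hper2 : ∫ t in θ..(θ + 2 * Real.pi), (a t)⁻¹
        = ∫ t in (0:ℝ)..(0 + 2 * Real.pi), (a t)⁻¹ := hinv_per.intervalIntegral_add_eq θ 0
    rw [zero_add] at hper2
    have : Bfun a (θ + 2 * Real.pi)
        = Bfun a θ + ∫ t in θ..(θ + 2 * Real.pi), (a t)⁻¹ := (hsplit).symm
    rw [this, hper2, hItot]
  set ψ : ℝ → ℂ := fun θ => Complex.exp (Complex.I * n * Bfun a θ) with hψ
  have hψper : Function.Periodic ψ (2 * Real.pi) := by
    intro θ
    simp only [hψ]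
    rw [hBper θ]
    push_cast
    rw [mul_add, Complex.exp_add]
    have hone : Complex.exp (Complex.I * (n:ℂ) * ((2 * Real.pi : ℝ) : ℂ)) = 1 := by
      have h2 := Complex.exp_int_mul_two_pi_mul_I n
      rw [← h2]
      congr 1
      push_cast
      ring
    rw [show (Complex.I * (n:ℂ) * (2 * (Real.pi:ℂ))) = Complex.I * (n:ℂ) * ((2 * Real.pi : ℝ) : ℂ)
      by push_cast; ring, hone, mul_one]
  have hψc : Continuous ψ :=
    Complex.continuous_exp.comp (continuous_const.mul (Complex.continuous_ofReal.comp hBc))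
  set ψ' : ℝ → ℂ := fun θ => ψ θ * (Complex.I * n * ((a θ)⁻¹ : ℝ)) with hψ'
  have hψd : ∀ θ, HasDerivAt ψ (ψ' θ) θ := by
    intro θ
    have h1 : HasDerivAt (fun x => ((Bfun a x : ℝ) : ℂ)) ((a θ)⁻¹ : ℝ) θ := (hB θ).ofReal_comp
    have h2 := (h1.const_mul (Complex.I * (n:ℂ))).cexp
    exact h2
  have hψ'c : Continuous ψ' :=
    hψc.mul (continuous_const.mul (Complex.continuous_ofReal.comp hinv_cont))
  have hψ'per : Function.Periodic ψ' (2 * Real.pi) := by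
    intro θ
    simp only [hψ']
    rw [hψper θ, haper θ]
  -- derivative coefficients
  have hder : ∀ k : ℤ, fCoef ψ' k = Complex.I * k * fCoef ψ k := fun k =>
    fCoef_deriv hψc hψ'c hψd hψper k
  -- |ψ| = 1
  have hunit : ∀ x, (starRingEnd ℂ) (ψ x) * ψ x = 1 := by
    intro x
    simp only [hψ]
    rw [← Complex.exp_conj, ← Complex.exp_add]
    have : (starRingEnd ℂ) (Complex.I * n * ((Bfun a x : ℝ) : ℂ))
        = -(Complex.I * n * ((Bfun a x : ℝ) : ℂ)) := by
      simp [map_mul, Complex.conj_I, Complex.conj_ofReal]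
    rw [this, neg_add_cancel, Complex.exp_zero]
  -- the main HasSum with value I * n
  have hFG := hasSum_conj_mul hψc hψ'c hψper hψ'per
  have hval : (((2 * Real.pi)⁻¹ : ℝ) •
      ∫ x in Set.Ioc (0:ℝ) (2 * Real.pi), (starRingEnd ℂ) (ψ x) * ψ' x : ℂ)
      = Complex.I * n := by
    have hint1 : ∫ x in Set.Ioc (0:ℝ) (2 * Real.pi), (starRingEnd ℂ) (ψ x) * ψ' x
        = ∫ x in Set.Ioc (0:ℝ) (2 * Real.pi), (Complex.I * (n:ℂ)) * (((a x)⁻¹ : ℝ) : ℂ) := by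
      apply setIntegral_congr_fun measurableSet_Ioc
      intro x _
      simp only [hψ']
      rw [show (starRingEnd ℂ) (ψ x) * (ψ x * (Complex.I * n * ((a x)⁻¹ : ℝ)))
          = ((starRingEnd ℂ) (ψ x) * ψ x) * (Complex.I * n * ((a x)⁻¹ : ℝ)) by ring,
        hunit, one_mul]
    have hofreal : ∫ x in Set.Ioc (0:ℝ) (2 * Real.pi), (((a x)⁻¹ : ℝ) : ℂ)
        = ((∫ x in Set.Ioc (0:ℝ) (2 * Real.pi), (a x)⁻¹ : ℝ) : ℂ) := integral_ofReal
    rw [hint1, integral_const_mul, hofreal]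
    have hioc : ∫ x in Set.Ioc (0:ℝ) (2 * Real.pi), (a x)⁻¹ = 2 * Real.pi := by
      rw [← intervalIntegral.integral_of_le hpi2.le]
      exact hItot
    have hpine : ((2 * Real.pi : ℝ) : ℂ) ≠ 0 := by
      rw [Complex.ofReal_ne_zero]; positivity
    rw [hioc, Complex.real_smul, Complex.ofReal_inv]
    rw [show ((2 * Real.pi : ℝ) : ℂ)⁻¹ * (Complex.I * (n:ℂ) * ((2 * Real.pi : ℝ) : ℂ))
        = (((2 * Real.pi : ℝ) : ℂ)⁻¹ * ((2 * Real.pi : ℝ) : ℂ)) * (Complex.I * (n:ℂ)) by ring,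
      inv_mul_cancel₀ hpine, one_mul]
  rw [hval] at hFG
  -- rewrite terms as I * k * ‖fCoef ψ k‖²
  have hterm2 : ∀ k : ℤ, (starRingEnd ℂ) (fCoef ψ k) * fCoef ψ' k
      = Complex.I * k * ((‖fCoef ψ k‖ ^ 2 : ℝ) : ℂ) := by
    intro k
    rw [hder k]
    have : ((‖fCoef ψ k‖ ^ 2 : ℝ) : ℂ) = (starRingEnd ℂ) (fCoef ψ k) * fCoef ψ k := by
      rw [← Complex.normSq_eq_conj_mul_self]
      norm_cast
      rw [Complex.normSq_eq_norm_sq]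
    rw [this]
    ring
  have hS2 : HasSum (fun k : ℤ => Complex.I * k * ((‖fCoef ψ k‖ ^ 2 : ℝ) : ℂ))
      (Complex.I * n) := hFG.congr_fun fun k => (hterm2 k).symm
  have hS3 : HasSum (fun k : ℤ => (k : ℝ) * ‖fCoef ψ k‖ ^ 2) (n : ℝ) := by
    have him := Complex.hasSum_im hS2
    simpa [← Complex.ofReal_pow] using him
  -- summability of ‖fCoef ψ k‖²
  have hFF := (hasSum_conj_mul hψc hψc hψper hψper).summable
  have hPsum : Summable fun k : ℤ => ‖fCoef ψ k‖ ^ 2 := by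
    rw [← Complex.summable_ofReal]
    apply hFF.congr
    intro k
    rw [← Complex.normSq_eq_conj_mul_self]
    norm_cast
    rw [Complex.normSq_eq_norm_sq]
  have hGG := (hasSum_conj_mul hψ'c hψ'c hψ'per hψ'per).summable
  have hQsum : Summable fun k : ℤ => (k : ℝ) ^ 2 * ‖fCoef ψ k‖ ^ 2 := by
    rw [← Complex.summable_ofReal]
    apply hGG.congr
    intro k
    rw [← Complex.normSq_eq_conj_mul_self, hder k]
    push_cast
    rw [Complex.normSq_eq_norm_sq]
    rw [norm_mul, norm_mul, Complex.norm_I, one_mul, Complex.norm_intCast]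
    norm_cast
    push_cast
    rw [mul_pow, sq_abs]
  -- summability of |k| ‖fCoef ψ k‖²
  have hcomp : Summable fun k : ℤ => |(k : ℝ)| * ‖fCoef ψ k‖ ^ 2 := by
    apply Summable.of_nonneg_of_le (fun k => by positivity) (fun k => ?_) (hPsum.add hQsum)
    have h1 : (0:ℝ) ≤ ‖fCoef ψ k‖ ^ 2 := by positivity
    have h2 : |(k:ℝ)| ≤ 1 + (k:ℝ)^2 := by nlinarith [sq_abs (k:ℝ), abs_nonneg (k:ℝ)]
    calc |(k : ℝ)| * ‖fCoef ψ k‖ ^ 2 ≤ (1 + (k:ℝ)^2) * ‖fCoef ψ k‖ ^ 2 := by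
          exact mul_le_mul_of_nonneg_right h2 h1
      _ = ‖fCoef ψ k‖ ^ 2 + (k:ℝ)^2 * ‖fCoef ψ k‖ ^ 2 := by ring
  refine ⟨hcomp, ?_⟩
  -- |n| ≤ ∑ |k| ‖fCoef ψ k‖²
  have h3 : (fun k : ℤ => ‖(k : ℝ) * ‖fCoef ψ k‖ ^ 2‖)
      = fun k : ℤ => |(k : ℝ)| * ‖fCoef ψ k‖ ^ 2 := by
    funext k
    rw [Real.norm_eq_abs, abs_mul, abs_of_nonneg (by positivity : (0:ℝ) ≤ ‖fCoef ψ k‖ ^ 2)]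
  have h4 : Summable fun k : ℤ => ‖(k : ℝ) * ‖fCoef ψ k‖ ^ 2‖ := by rw [h3]; exact hcomp
  have h5 := norm_tsum_le_tsum_norm h4
  rw [h3, hS3.tsum_eq, Real.norm_eq_abs] at h5
  exact h5
end
end

section
/- Let m ∈ ℤ and let b : ℝ → ℝ be a C^∞ function with b(θ+2π) = b(θ) + 2πm for all θ. Let ψ(θ) = e^{ib(θ)} (a smooth 2π-periodic function of modulus one) with Fourier coefficients ψ̂(k) = (1/2π)∫₀^{2π} ψ(θ)e^{−ikθ}dθ. Then the series ∑_{k∈ℤ} k·|ψ̂(k)|² converges absolutely and ∑_{k∈ℤ} k·|ψ̂(k)|² = m. -/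
open MeasureTheory Real

noncomputable section

/-- **Winding number identity.** For a smooth `b : ℝ → ℝ` with `b(θ+2π) = b(θ) + 2πm`
and `ψ = e^{ib}`, the series `∑ₖ k |ψ̂(k)|²` converges absolutely and equals `m`. -/
theorem winding_number_identity
    (m : ℤ) (b : ℝ → ℝ) (hb : ContDiff ℝ (⊤ : ℕ∞) b)
    (hper : ∀ θ, b (θ + 2 * Real.pi) = b θ + 2 * Real.pi * m) :
    Summable (fun k : ℤ =>
      |(k : ℝ)| * ‖fCoef (fun θ => Complex.exp (Complex.I * b θ)) k‖ ^ 2) ∧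
    ∑' k : ℤ, (k : ℝ) * ‖fCoef (fun θ => Complex.exp (Complex.I * b θ)) k‖ ^ 2 = m := by
  haveI hT : Fact (0 < 2 * π) := ⟨by positivity⟩
  have hπ : (2 * π : ℝ) ≠ 0 := by positivity
  set ψ : ℝ → ℂ := fun θ => Complex.exp (Complex.I * b θ) with hψdef
  have hbd : Differentiable ℝ b := hb.differentiable (by simp)
  set b' : ℝ → ℝ := deriv b with hb'def
  have hb'c : Continuous b' := hb.continuous_deriv (by simp)
  have hderiv : ∀ θ, HasDerivAt b (b' θ) θ := fun θ => (hbd θ).hasDerivAt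
  -- periodicity of b'
  have hb'per : Function.Periodic b' (2 * π) := by
    intro θ
    have h1 : HasDerivAt (fun t => b (t + 2 * π)) (b' (θ + 2 * π)) θ :=
      (hderiv (θ + 2 * π)).comp_add_const
    have h2 : HasDerivAt (fun t => b (t + 2 * π)) (b' θ) θ := by
      have he : (fun t => b (t + 2 * π)) = fun t => b t + 2 * π * m := funext hper
      rw [he]; exact (hderiv θ).add_const _
    exact h1.unique h2
  -- continuity and periodicity of ψ
  have hψc : Continuous ψ :=
    Complex.continuous_exp.comp (continuous_const.mul (Complex.continuous_ofReal.comp hb.continuous))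
  have hψper : Function.Periodic ψ (2 * π) := by
    intro θ
    simp only [hψdef, hper θ]
    push_cast
    rw [mul_add, Complex.exp_add]
    have h1 : Complex.I * (2 * π * m) = (m : ℂ) * (2 * π * Complex.I) := by ring
    rw [h1, Complex.exp_int_mul_two_pi_mul_I, mul_one]
  -- derivative of ψ
  have hψD : ∀ θ, HasDerivAt ψ (Complex.I * b' θ * ψ θ) θ := by
    intro θ
    have h1 : HasDerivAt (fun t : ℝ => (b t : ℂ)) (b' θ) θ := (hderiv θ).ofReal_comp
    have h2 := (h1.const_mul Complex.I).cexp
    convert h2 using 1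
    ring
  set φ : ℝ → ℂ := fun θ => (b' θ : ℂ) * ψ θ with hφdef
  have hφc : Continuous φ := (Complex.continuous_ofReal.comp hb'c).mul hψc
  have hφper : Function.Periodic φ (2 * π) := by
    intro θ; simp only [hφdef, hb'per θ, hψper θ]
  -- lifts to the circle
  set Ψ : C(AddCircle (2 * π), ℂ) := ⟨hψper.lift, hψc.quotient_liftOn' _⟩ with hΨdef
  set Φ : C(AddCircle (2 * π), ℂ) := ⟨hφper.lift, hφc.quotient_liftOn' _⟩ with hΦdef
  -- the fourier character as a concrete exponential
  have hfour : ∀ (k : ℤ) (x : ℝ),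
      (fourier (-k) (x : AddCircle (2 * π)) : ℂ) = Complex.exp (-Complex.I * k * x) := by
    intro k x
    rw [fourier_coe_apply]
    congr 1
    have hπ' : ((π : ℝ) : ℂ) ≠ 0 := by exact_mod_cast Real.pi_ne_zero
    push_cast
    rw [div_eq_iff (by simp [Real.pi_ne_zero] : (2 * (π:ℂ)) ≠ 0)]
    ring
  -- fourier coefficients of lifts as interval integrals
  have coef_eq : ∀ (f : ℝ → ℂ) (hp : Function.Periodic f (2 * π)) (k : ℤ),
      fourierCoeff hp.lift k
        = (2 * π : ℝ)⁻¹ • ∫ x in (0:ℝ)..(2 * π), Complex.exp (-Complex.I * k * x) * f x := by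
    intro f hp k
    rw [fourierCoeff_eq_intervalIntegral _ k 0, zero_add, one_div]
    congr 1
    apply intervalIntegral.integral_congr
    intro x _
    simp only [smul_eq_mul, hfour, Function.Periodic.lift_coe]
  have hΨcoef : ∀ k, fourierCoeff (⇑Ψ) k = fCoef ψ k := by
    intro k
    show fourierCoeff hψper.lift k = _
    rw [coef_eq ψ hψper k, fCoef]
    rw [Complex.real_smul]
    push_cast
    congr 1
    apply intervalIntegral.integral_congr
    intro x _
    exact mul_comm _ _
  -- integration by parts: key identity for coefficients of φ
  have key : ∀ k : ℤ, (∫ x in (0:ℝ)..(2 * π), Complex.exp (-Complex.I * k * x) * φ x)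
      = (k : ℂ) * ∫ x in (0:ℝ)..(2 * π), Complex.exp (-Complex.I * k * x) * ψ x := by
    intro k
    have huc : Continuous fun x : ℝ => Complex.exp (-Complex.I * k * x) :=
      Complex.continuous_exp.comp (continuous_const.mul Complex.continuous_ofReal)
    have hu : ∀ x ∈ Set.uIcc (0:ℝ) (2 * π),
        HasDerivAt (fun x : ℝ => Complex.exp (-Complex.I * k * x))
          (-Complex.I * k * Complex.exp (-Complex.I * k * x)) x := by
      intro x _
      have h1 : HasDerivAt (fun x : ℝ => (x : ℂ)) 1 x := Complex.ofRealCLM.hasDerivAt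
      have h2 := (h1.const_mul (-Complex.I * k)).cexp
      convert h2 using 1
      ring
    have hv : ∀ x ∈ Set.uIcc (0:ℝ) (2 * π), HasDerivAt ψ (Complex.I * b' x * ψ x) x :=
      fun x _ => hψD x
    have hI1 : IntervalIntegrable
        (fun x : ℝ => -Complex.I * k * Complex.exp (-Complex.I * k * x)) volume 0 (2 * π) :=
      (continuous_const.mul huc).intervalIntegrable _ _
    have hI2 : IntervalIntegrable (fun x : ℝ => Complex.I * b' x * ψ x) volume 0 (2 * π) := by
      apply Continuous.intervalIntegrable
      exact (continuous_const.mul (Complex.continuous_ofReal.comp hb'c)).mul hψc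
    have IBP := intervalIntegral.integral_mul_deriv_eq_deriv_mul hu hv hI1 hI2
    -- boundary terms
    have hexp1 : Complex.exp (-Complex.I * k * ((2 * π : ℝ) : ℂ)) = 1 := by
      have := Complex.exp_int_mul_two_pi_mul_I (-k)
      rw [← this]
      congr 1
      push_cast
      ring
    have hψbd : ψ (2 * π) = ψ 0 := by
      have := hψper 0
      rwa [zero_add] at this
    rw [hexp1, hψbd] at IBP
    simp only [Complex.ofReal_zero, mul_zero, Complex.exp_zero, one_mul] at IBP
    rw [sub_self, zero_sub] at IBP
    -- IBP : ∫ exp(-Ikx) * (I b' ψ) = -∫ (-Ik exp(-Ikx)) * ψ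
    have lhs_eq : (∫ x in (0:ℝ)..(2 * π), Complex.exp (-Complex.I * k * x) * (Complex.I * b' x * ψ x))
        = Complex.I * ∫ x in (0:ℝ)..(2 * π), Complex.exp (-Complex.I * k * x) * φ x := by
      rw [← intervalIntegral.integral_const_mul]
      apply intervalIntegral.integral_congr
      intro x _
      simp only [hφdef]
      ring
    have h3 : (∫ x in (0:ℝ)..(2 * π), (-Complex.I * k * Complex.exp (-Complex.I * k * x)) * ψ x)
        = (-Complex.I * (k : ℂ)) * ∫ x in (0:ℝ)..(2 * π), Complex.exp (-Complex.I * k * x) * ψ x := by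
      rw [← intervalIntegral.integral_const_mul]
      apply intervalIntegral.integral_congr
      intro x _
      simp only []
      ring
    have rhs_eq : (-∫ x in (0:ℝ)..(2 * π),
          (-Complex.I * k * Complex.exp (-Complex.I * k * x)) * ψ x)
        = Complex.I * ((k : ℂ) * ∫ x in (0:ℝ)..(2 * π), Complex.exp (-Complex.I * k * x) * ψ x) := by
      rw [h3]; ring
    rw [lhs_eq, rhs_eq] at IBP
    exact mul_left_cancel₀ Complex.I_ne_zero IBP
  have hΦcoef : ∀ k, fourierCoeff (⇑Φ) k = (k : ℂ) * fourierCoeff (⇑Ψ) k := by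
    intro k
    show fourierCoeff hφper.lift k = (k : ℂ) * fourierCoeff hψper.lift k
    rw [coef_eq φ hφper k, coef_eq ψ hψper k, key k, Complex.real_smul, Complex.real_smul]
    ring
  -- move to L²
  set F : Lp ℂ 2 (AddCircle.haarAddCircle (T := 2 * π)) :=
    ContinuousMap.toLp 2 AddCircle.haarAddCircle ℂ Ψ with hFdef
  set G : Lp ℂ 2 (AddCircle.haarAddCircle (T := 2 * π)) :=
    ContinuousMap.toLp 2 AddCircle.haarAddCircle ℂ Φ with hGdef
  have hFr : ∀ k, fourierBasis.repr F k = fourierCoeff (⇑Ψ) k := by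
    intro k; rw [fourierBasis_repr]; exact fourierCoeff_toLp Ψ k
  have hGr : ∀ k, fourierBasis.repr G k = fourierCoeff (⇑Φ) k := by
    intro k; rw [fourierBasis_repr]; exact fourierCoeff_toLp Φ k
  -- Bessel: square-summability
  have hsqF : Summable fun k : ℤ => ‖fourierCoeff (⇑Ψ) k‖ ^ 2 := by
    have h := (lp.memℓp (fourierBasis.repr F)).summable (by norm_num)
    have h2 : ∀ k : ℤ, ‖fourierBasis.repr F k‖ ^ ((2 : ENNReal).toReal)
        = ‖fourierCoeff (⇑Ψ) k‖ ^ 2 := by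
      intro k
      rw [hFr k]
      norm_num [Real.rpow_natCast]
    simpa only [h2] using h
  have hsqG : Summable fun k : ℤ => ‖fourierCoeff (⇑Φ) k‖ ^ 2 := by
    have h := (lp.memℓp (fourierBasis.repr G)).summable (by norm_num)
    have h2 : ∀ k : ℤ, ‖fourierBasis.repr G k‖ ^ ((2 : ENNReal).toReal)
        = ‖fourierCoeff (⇑Φ) k‖ ^ 2 := by
      intro k
      rw [hGr k]
      norm_num [Real.rpow_natCast]
    simpa only [h2] using h
  -- the inner product ⟪F, G⟫ equals m
  have hinner : (inner ℂ F G : ℂ) = (m : ℂ) := by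
    rw [hFdef, hGdef, ContinuousMap.inner_toLp]
    -- the integrand is the lift of b'
    have hgper : Function.Periodic (fun θ : ℝ => ((b' θ : ℝ) : ℂ)) (2 * π) := by
      intro θ; simp [hb'per θ]
    have hptwise : (fun x : AddCircle (2 * π) => (starRingEnd ℂ) (Ψ x) * Φ x) = hgper.lift := by
      funext x
      induction x using QuotientAddGroup.induction_on with
      | H θ =>
        show (starRingEnd ℂ) (hψper.lift θ) * hφper.lift θ = hgper.lift θ
        rw [Function.Periodic.lift_coe, Function.Periodic.lift_coe, Function.Periodic.lift_coe]
        simp only [hψdef, hφdef]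
        rw [← Complex.exp_conj, map_mul, Complex.conj_I, Complex.conj_ofReal]
        have he : Complex.exp (-Complex.I * (b θ : ℂ)) * ((b' θ : ℂ) * Complex.exp (Complex.I * (b θ : ℂ)))
            = (b' θ : ℂ) * Complex.exp (-Complex.I * (b θ : ℂ) + Complex.I * (b θ : ℂ)) := by
          rw [Complex.exp_add]; ring
        rw [he]
        simp
    rw [show (fun x => Φ x * (starRingEnd ℂ) (Ψ x)) = fun x => (starRingEnd ℂ) (Ψ x) * Φ x from funext fun x => mul_comm _ _, hptwise]
    -- integral over haar = 0-th fourier coefficient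
    have h0 : (∫ x : AddCircle (2 * π), hgper.lift x ∂AddCircle.haarAddCircle)
        = fourierCoeff hgper.lift 0 := by
      rw [fourierCoeff]
      apply integral_congr_ae
      filter_upwards with x
      simp
    rw [h0, coef_eq _ hgper 0]
    have hint : (∫ x in (0:ℝ)..(2 * π),
        Complex.exp (-Complex.I * (0:ℤ) * x) * ((b' x : ℝ) : ℂ))
        = ((∫ x in (0:ℝ)..(2 * π), b' x : ℝ) : ℂ) := by
      rw [← intervalIntegral.integral_ofReal]
      apply intervalIntegral.integral_congr
      intro x _
      simp
    have hb'int : (∫ x in (0:ℝ)..(2 * π), b' x) = 2 * π * m := by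
      rw [hb'def, intervalIntegral.integral_deriv_eq_sub (fun x _ => hbd x)
        (hb'c.intervalIntegrable _ _)]
      have := hper 0
      rw [zero_add] at this
      rw [this]; ring
    rw [hint, hb'int, Complex.real_smul]
    push_cast
    have h2 : (2 * (π:ℂ)) ≠ 0 := by simp [Real.pi_ne_zero]
    rw [inv_mul_eq_div, mul_comm (2 * (π:ℂ)) (m:ℂ), mul_div_assoc, div_self h2, mul_one]
  -- Parseval for the pair (F, G)
  have hpars : ∑' k : ℤ, (starRingEnd ℂ) (fourierCoeff (⇑Ψ) k) * fourierCoeff (⇑Φ) k = (m : ℂ) := by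
    have h := fourierBasis.repr.inner_map_map F G
    rw [lp.inner_eq_tsum] at h
    rw [← hinner, ← h]
    apply tsum_congr
    intro k
    rw [RCLike.inner_apply, hFr, hGr, mul_comm]
  -- identify the terms
  have hterm : ∀ k : ℤ, (starRingEnd ℂ) (fourierCoeff (⇑Ψ) k) * fourierCoeff (⇑Φ) k
      = (((k : ℝ) * ‖fCoef ψ k‖ ^ 2 : ℝ) : ℂ) := by
    intro k
    rw [hΦcoef k, hΨcoef k]
    have : (starRingEnd ℂ) (fCoef ψ k) * ((k : ℂ) * fCoef ψ k)
        = (k : ℂ) * ((starRingEnd ℂ) (fCoef ψ k) * fCoef ψ k) := by ring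
    rw [this, mul_comm ((starRingEnd ℂ) (fCoef ψ k)) _, Complex.mul_conj]
    rw [Complex.normSq_eq_norm_sq]
    push_cast
    ring
  -- summability of the absolute series
  have habs : Summable (fun k : ℤ => |(k : ℝ)| * ‖fCoef ψ k‖ ^ 2) := by
    have hsqF' : Summable fun k : ℤ => ‖fCoef ψ k‖ ^ 2 := by
      refine hsqF.congr fun k => by rw [hΨcoef k]
    have hsqG' : Summable fun k : ℤ => ((k:ℝ) * ‖fCoef ψ k‖) ^ 2 := by
      refine hsqG.congr fun k => ?_
      rw [hΦcoef k, hΨcoef k]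
      rw [norm_mul, mul_pow]
      norm_num
      ring
    apply Summable.of_nonneg_of_le
      (fun k => by positivity)
      (fun k => ?_) (((hsqG'.add hsqF').div_const 2))
    have h2 : 2 * (|(k:ℝ)| * ‖fCoef ψ k‖ ^ 2)
        ≤ ((k:ℝ) * ‖fCoef ψ k‖) ^ 2 + ‖fCoef ψ k‖ ^ 2 := by
      have := two_mul_le_add_sq (|(k:ℝ)| * ‖fCoef ψ k‖) (‖fCoef ψ k‖)
      calc 2 * (|(k:ℝ)| * ‖fCoef ψ k‖ ^ 2)
          = 2 * (|(k:ℝ)| * ‖fCoef ψ k‖) * ‖fCoef ψ k‖ := by ring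
        _ ≤ (|(k:ℝ)| * ‖fCoef ψ k‖) ^ 2 + ‖fCoef ψ k‖ ^ 2 := by nlinarith [norm_nonneg (fCoef ψ k), abs_nonneg ((k:ℝ))]
        _ = ((k:ℝ) * ‖fCoef ψ k‖) ^ 2 + ‖fCoef ψ k‖ ^ 2 := by
            rw [mul_pow, mul_pow, sq_abs]
    linarith
  refine ⟨habs, ?_⟩
  -- from complex identity to real identity
  have hrs : Summable (fun k : ℤ => (k : ℝ) * ‖fCoef ψ k‖ ^ 2) := by
    apply Summable.of_abs
    refine habs.congr fun k => ?_
    rw [abs_mul, abs_of_nonneg (by positivity : (0:ℝ) ≤ ‖fCoef ψ k‖ ^ 2)]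
  have hofReal : ((∑' k : ℤ, (k : ℝ) * ‖fCoef ψ k‖ ^ 2 : ℝ) : ℂ) = (m : ℂ) := by
    rw [Complex.ofReal_tsum]
    rw [← hpars]
    exact tsum_congr fun k => (hterm k).symm
  exact_mod_cast hofReal
end
end

section
/- Let b : ℝ → ℝ be a C^∞ function with b(θ+2π) = b(θ) + 2π and b′(θ) > 0 for all θ. Suppose that for some integer n ≥ 2, all negative Fourier coefficients of the two functions θ ↦ e^{inb(θ)} and θ ↦ e^{i(n+1)b(θ)} vanish, i.e. (1/2π)∫₀^{2π} e^{imb(θ)}e^{−ikθ}dθ = 0 for m ∈ {n, n+1} and all integers k < 0. Then all negative Fourier coefficients of θ ↦ e^{ib(θ)} vanish: (1/2π)∫₀^{2π} e^{ib(θ)}e^{−ikθ}dθ = 0 for all integers k < 0. -/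
open MeasureTheory Real

noncomputable section

namespace L26

open Complex Set Filter Metric Function intervalIntegral
open scoped ContDiff Interval

lemma fourier_eq_exp (k : ℤ) (x : ℝ) {T : ℝ} (hT : T = 2 * π) :
    (fourier k (x : AddCircle T) : ℂ) = Complex.exp (Complex.I * k * x) := by
  subst hT
  rw [fourier_coe_apply]
  congr 1
  have hπ : (π : ℂ) ≠ 0 := Complex.ofReal_ne_zero.mpr Real.pi_ne_zero
  field_simp
  push_cast
  ring

lemma fCoef_eq_fourierCoeffOn (u : ℝ → ℂ) (k : ℤ) :
    fCoef u k = fourierCoeffOn Real.two_pi_pos u k := by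
  rw [fourierCoeffOn_eq_integral, fCoef]
  have h1 : ∀ x : ℝ, (fourier (-k) (x : AddCircle (2 * π - 0)) : ℂ) • u x
      = u x * Complex.exp (-Complex.I * k * x) := by
    intro x
    rw [smul_eq_mul, mul_comm, fourier_eq_exp (-k) x (by norm_num)]
    push_cast
    ring_nf
  rw [intervalIntegral.integral_congr (g := fun x => u x * Complex.exp (-Complex.I * k * x))
    (fun x _ => h1 x)]
  rw [real_smul]
  push_cast
  norm_num

lemma fCoef_eq_fourierCoeff {u : ℝ → ℂ} (hper : Function.Periodic u (2 * π)) (k : ℤ) :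
    haveI : Fact (0 < 2 * π) := ⟨Real.two_pi_pos⟩
    fourierCoeff ((hper.lift : AddCircle (2 * π) → ℂ)) k = fCoef u k := by
  haveI : Fact (0 < 2 * π) := ⟨Real.two_pi_pos⟩
  rw [fourierCoeff_eq_intervalIntegral _ k 0, fCoef]
  have h1 : ∀ x : ℝ, (fourier (-k) (x : AddCircle (2 * π)) : ℂ) • (hper.lift : AddCircle (2 * π) → ℂ) x
      = u x * Complex.exp (-Complex.I * k * x) := by
    intro x
    rw [smul_eq_mul, Function.Periodic.lift_coe, mul_comm, fourier_eq_exp (-k) x rfl]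
    push_cast
    ring_nf
  rw [zero_add, intervalIntegral.integral_congr (g := fun x => u x * Complex.exp (-Complex.I * k * x))
    (fun x _ => h1 x)]
  rw [real_smul]
  push_cast
  norm_num


lemma periodic_deriv {f : ℝ → ℂ} (hf : Function.Periodic f (2 * π)) :
    Function.Periodic (deriv f) (2 * π) := by
  intro x
  have h1 : deriv (fun y => f (y + 2 * π)) x = deriv f (x + 2 * π) :=
    deriv_comp_add_const f (2 * π) x
  have h2 : (fun y => f (y + 2 * π)) = f := funext fun y => hf y
  rw [h2] at h1
  exact h1.symm

lemma one_le_inf : (1 : WithTop ℕ∞) ≤ ∞ := by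
  exact_mod_cast (le_top : (1:ℕ∞) ≤ ⊤)

lemma norm_fCoef_le (u : ℝ → ℂ) (M : ℝ) (hM : ∀ θ ∈ Set.uIoc (0:ℝ) (2*π), ‖u θ‖ ≤ M) (k : ℤ) :
    ‖fCoef u k‖ ≤ M := by
  have hexp : ∀ x : ℝ, ‖Complex.exp (-Complex.I * k * x)‖ = 1 := by
    intro x
    have : -Complex.I * k * x = ((-(k * x) : ℝ) : ℂ) * Complex.I := by push_cast; ring
    rw [this, Complex.norm_exp_ofReal_mul_I]
  have hint : ‖∫ θ in (0:ℝ)..(2*π), u θ * Complex.exp (-Complex.I * k * θ)‖ ≤ M * |2*π - 0| := by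
    apply intervalIntegral.norm_integral_le_of_norm_le_const
    intro x hx
    rw [norm_mul, hexp x, mul_one]
    exact hM x hx
  have hmem : π ∈ Set.uIoc (0:ℝ) (2*π) := by
    rw [Set.uIoc_of_le (by positivity)]
    exact ⟨Real.pi_pos, by nlinarith [Real.pi_pos]⟩
  have hM0 : 0 ≤ M := le_trans (norm_nonneg _) (hM π hmem)
  have hnrm : ‖((2 * (π:ℝ)) : ℂ)⁻¹‖ = (2*π)⁻¹ := by
    rw [norm_inv]
    simp [abs_of_pos Real.two_pi_pos, Real.pi_nonneg]
  calc ‖fCoef u k‖ = ‖((2 * (π:ℝ)) : ℂ)⁻¹‖ * ‖∫ θ in (0:ℝ)..(2*π), u θ * Complex.exp (-Complex.I * k * θ)‖ := by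
        rw [fCoef, norm_mul]; norm_num
    _ ≤ (2*π)⁻¹ * (M * |2*π - 0|) := by
        rw [hnrm]
        exact mul_le_mul_of_nonneg_left hint (by positivity)
    _ = M := by
        rw [abs_of_pos (by norm_num [Real.pi_pos] : (0:ℝ) < 2*π - 0)]
        field_simp
        ring

lemma fCoef_deriv {u : ℝ → ℂ} (hu : ContDiff ℝ ∞ u) (hper : Function.Periodic u (2 * π))
    {k : ℤ} (hk : k ≠ 0) : fCoef u k = (Complex.I * k)⁻¹ * fCoef (deriv u) k := by
  have hdiff : Differentiable ℝ u := hu.differentiable (by simp)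
  have hder : ∀ x ∈ [[(0:ℝ), 2*π]], HasDerivAt u (deriv u x) x :=
    fun x _ => (hdiff x).hasDerivAt
  have hcont : Continuous (deriv u) := hu.continuous_deriv one_le_inf
  have h := fourierCoeffOn_of_hasDerivAt Real.two_pi_pos hk hder
    (hcont.intervalIntegrable 0 (2*π))
  rw [← fCoef_eq_fourierCoeffOn, ← fCoef_eq_fourierCoeffOn] at h
  have hu2 : u (2*π) = u 0 := by simpa using (hper 0)
  rw [hu2, sub_self, mul_zero, zero_sub] at h
  rw [h]
  have hπ : (π : ℂ) ≠ 0 := Complex.ofReal_ne_zero.mpr Real.pi_ne_zero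
  have hkC : (k : ℂ) ≠ 0 := Int.cast_ne_zero.mpr hk
  have hI : Complex.I ≠ 0 := Complex.I_ne_zero
  field_simp
  push_cast
  ring

lemma summable_fCoef {u : ℝ → ℂ} (hu : ContDiff ℝ ∞ u) (hper : Function.Periodic u (2 * π)) :
    Summable (fCoef u) := by
  have h1 : ContDiff ℝ ∞ (deriv u) := (contDiff_infty_iff_deriv.mp hu).2
  have h2 : ContDiff ℝ ∞ (deriv (deriv u)) := (contDiff_infty_iff_deriv.mp h1).2
  have hp1 : Function.Periodic (deriv u) (2 * π) := periodic_deriv hper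
  obtain ⟨M, hM⟩ := (isCompact_Icc (a := (0:ℝ)) (b := 2*π)).exists_bound_of_continuousOn
    (h2.continuous.continuousOn (s := Set.Icc 0 (2*π)))
  have hMle : ∀ k : ℤ, ‖fCoef (deriv (deriv u)) k‖ ≤ M := by
    intro k
    apply norm_fCoef_le
    intro θ hθ
    rw [Set.uIoc_of_le (by positivity)] at hθ
    exact hM θ (Set.Ioc_subset_Icc_self hθ)
  have hbound : ∀ k : ℤ, k ≠ 0 → ‖fCoef u k‖ ≤ M * (1 / (k:ℝ)^2) := by
    intro k hk
    have e1 : fCoef u k = (Complex.I * k)⁻¹ * ((Complex.I * k)⁻¹ * fCoef (deriv (deriv u)) k) := by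
      rw [fCoef_deriv hu hper hk, fCoef_deriv h1 hp1 hk]
    have hnorm : ‖(Complex.I * (k:ℂ))⁻¹‖ = 1 / |(k:ℝ)| := by
      rw [norm_inv, norm_mul, Complex.norm_I, one_mul,
        one_div]
      norm_num [Complex.norm_intCast]
    rw [e1, norm_mul, norm_mul, hnorm]
    calc 1 / |(k:ℝ)| * (1 / |(k:ℝ)| * ‖fCoef (deriv (deriv u)) k‖)
        = ‖fCoef (deriv (deriv u)) k‖ * (1/(|(k:ℝ)|^2)) := by ring
      _ ≤ M * (1 / (k:ℝ)^2) := by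
          rw [show |(k:ℝ)|^2 = (k:ℝ)^2 from sq_abs _]
          apply mul_le_mul_of_nonneg_right (hMle k) (by positivity)
  have hsum : Summable (fun k : ℤ => M * (1 / (k:ℝ)^2)) :=
    (summable_one_div_int_pow.mpr one_lt_two).mul_left M
  apply Summable.of_norm_bounded_eventually hsum
  rw [Filter.eventually_cofinite]
  apply Set.Finite.subset (Set.finite_singleton (0:ℤ))
  intro k hk
  simp only [Set.mem_setOf_eq, not_le] at hk
  by_contra hk0
  exact absurd (hbound k hk0) (not_le.mpr hk)

lemma hasSum_fCoef {u : ℝ → ℂ} (hc : Continuous u) (hper : Function.Periodic u (2 * π))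
    (hsum : Summable (fCoef u)) (θ : ℝ) :
    HasSum (fun k : ℤ => fCoef u k * Complex.exp (Complex.I * k * θ)) (u θ) := by
  haveI : Fact (0 < 2 * π) := ⟨Real.two_pi_pos⟩
  have hlc : Continuous (hper.lift : AddCircle (2 * π) → ℂ) := hc.quotient_liftOn' _
  set f : C(AddCircle (2 * π), ℂ) := ⟨(hper.lift : AddCircle (2 * π) → ℂ), hlc⟩ with hf
  have hcoef : ∀ k, fourierCoeff (⇑f) k = fCoef u k := fun k => fCoef_eq_fourierCoeff hper k
  have hsum' : Summable (fourierCoeff (⇑f)) := by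
    rw [show fourierCoeff (⇑f) = fCoef u from funext hcoef]; exact hsum
  have h := has_pointwise_sum_fourier_series_of_summable hsum' (θ : AddCircle (2*π))
  have h2 : ∀ k : ℤ, fourierCoeff (⇑f) k • (fourier k (θ : AddCircle (2*π)) : ℂ)
      = fCoef u k * Complex.exp (Complex.I * k * θ) := by
    intro k
    rw [smul_eq_mul, hcoef, fourier_eq_exp k θ rfl]
  have h3 : f (θ : AddCircle (2*π)) = u θ := Function.Periodic.lift_coe hper θ
  rw [h3] at h
  exact HasSum.congr_fun h fun k => (h2 k).symm

lemma norm_exp_I_mul (r : ℝ) : ‖Complex.exp (Complex.I * r)‖ = 1 := by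
  rw [show Complex.I * r = (r:ℂ) * Complex.I by ring,
    Complex.norm_exp_ofReal_mul_I]

lemma norm_exp_I_int_mul (m : ℤ) (r : ℝ) : ‖Complex.exp (Complex.I * m * r)‖ = 1 := by
  rw [show Complex.I * m * r = ((m*r : ℝ):ℂ) * Complex.I by push_cast; ring,
    Complex.norm_exp_ofReal_mul_I]

lemma disc_ext {u : ℝ → ℂ} (hu : ContDiff ℝ ∞ u) (hper : Function.Periodic u (2 * π))
    (hvan : ∀ k : ℤ, k < 0 → fCoef u k = 0) :
    ∃ F : ℂ → ℂ, ContinuousOn F (Metric.closedBall 0 1) ∧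
      DifferentiableOn ℂ F (Metric.ball 0 1) ∧
      ∀ θ : ℝ, F (Complex.exp (Complex.I * θ)) = u θ := by
  have hsum := summable_fCoef hu hper
  have hsumN : Summable (fun j : ℕ => ‖fCoef u (j:ℤ)‖) :=
    (hsum.comp_injective (Nat.cast_injective : Function.Injective ((↑) : ℕ → ℤ))).norm
  have hbd : ∀ (j : ℕ) (z : ℂ), z ∈ Metric.closedBall (0:ℂ) 1 →
      ‖fCoef u (j:ℤ) * z ^ j‖ ≤ ‖fCoef u (j:ℤ)‖ := by
    intro j z hz
    rw [norm_mul, norm_pow]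
    calc ‖fCoef u (j:ℤ)‖ * ‖z‖ ^ j ≤ ‖fCoef u (j:ℤ)‖ * 1 := by
          apply mul_le_mul_of_nonneg_left _ (norm_nonneg _)
          exact pow_le_one₀ (norm_nonneg _) (mem_closedBall_zero_iff.mp hz)
      _ = ‖fCoef u (j:ℤ)‖ := mul_one _
  refine ⟨fun z => ∑' j : ℕ, fCoef u (j:ℤ) * z ^ j, ?_, ?_, ?_⟩
  · exact continuousOn_tsum
      (fun j => (continuous_const.mul (continuous_pow j)).continuousOn) hsumN hbd
  · exact differentiableOn_tsum_of_summable_norm hsumN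
      (fun j => ((differentiable_const _).mul (differentiable_pow j)).differentiableOn)
      isOpen_ball (fun j z hz => hbd j z (Metric.ball_subset_closedBall hz))
  · intro θ
    have h := hasSum_fCoef hu.continuous hper hsum θ
    have h0 : ∀ k : ℤ, k ∉ Set.range ((↑) : ℕ → ℤ) →
        fCoef u k * Complex.exp (Complex.I * k * θ) = 0 := by
      intro k hk
      have hneg : k < 0 := by
        by_contra h'
        push_neg at h'
        exact hk ⟨k.toNat, Int.toNat_of_nonneg h'⟩
      rw [hvan k hneg, zero_mul]
    have h2 := (Function.Injective.hasSum_iff (Nat.cast_injective : Function.Injective ((↑) : ℕ → ℤ)) h0).mpr h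
    have h3 : ∀ j : ℕ, fCoef u (j:ℤ) * (Complex.exp (Complex.I * θ)) ^ j
        = ((fun k : ℤ => fCoef u k * Complex.exp (Complex.I * k * θ)) ∘ ((↑) : ℕ → ℤ)) j := by
      intro j
      simp only [Function.comp_apply]
      congr 1
      rw [← Complex.exp_nat_mul]
      congr 1
      push_cast
      ring
    exact (HasSum.congr_fun h2 h3).tsum_eq

lemma eqOn_closedBall_of_eqOn_sphere {F G : ℂ → ℂ}
    (hFc : ContinuousOn F (Metric.closedBall 0 1)) (hFd : DifferentiableOn ℂ F (Metric.ball 0 1))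
    (hGc : ContinuousOn G (Metric.closedBall 0 1)) (hGd : DifferentiableOn ℂ G (Metric.ball 0 1))
    (heq : Set.EqOn F G (Metric.sphere 0 1)) : Set.EqOn F G (Metric.closedBall 0 1) := by
  intro z hz
  have hcl : closure (Metric.ball (0:ℂ) 1) = Metric.closedBall 0 1 := closure_ball _ one_ne_zero
  have hfr : frontier (Metric.ball (0:ℂ) 1) = Metric.sphere 0 1 := frontier_ball _ one_ne_zero
  have h0 : ‖F z - G z‖ ≤ 0 := by
    apply Complex.norm_le_of_forall_mem_frontier_norm_le Metric.isBounded_ball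
      ⟨hFd.sub hGd, by rw [hcl]; exact hFc.sub hGc⟩
    · intro w hw
      rw [hfr] at hw
      rw [Pi.sub_apply, heq hw, sub_self, norm_zero]
    · rw [hcl]; exact hz
  have := le_antisymm h0 (norm_nonneg _)
  rwa [norm_eq_zero, sub_eq_zero] at this

lemma removable_finite (E : Finset ℂ) :
    ∀ (s : Set ℂ), IsOpen s → ∀ (h : ℂ → ℂ) (C : ℝ),
    DifferentiableOn ℂ h (s \ (E : Set ℂ)) → (∀ z ∈ s \ (E : Set ℂ), ‖h z‖ ≤ C) →
    ∃ g : ℂ → ℂ, DifferentiableOn ℂ g s ∧ Set.EqOn g h (s \ (E : Set ℂ)) := by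
  induction E using Finset.induction_on with
  | empty =>
      intro s hs h C hd hb
      exact ⟨h, by simpa using hd, by simp [Set.EqOn]⟩
  | @insert z₀ E hz₀ ih =>
      intro s hs h C hd hb
      by_cases hz₀s : z₀ ∈ s
      · have hset : s \ ((insert z₀ E : Finset ℂ) : Set ℂ) = (s \ (E : Set ℂ)) \ {z₀} := by
          ext w
          simp only [Finset.coe_insert, Set.mem_diff, Set.mem_insert_iff, Set.mem_singleton_iff,
            Finset.mem_coe]
          tauto
        have hEclosed : IsClosed ((E : Set ℂ)) := (E.finite_toSet).isClosed
        have hs'open : IsOpen (s \ (E : Set ℂ)) := hs.sdiff hEclosed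
        have hmem : (s \ (E : Set ℂ)) ∈ nhds z₀ :=
          hs'open.mem_nhds ⟨hz₀s, by simpa using hz₀⟩
        have hd' : DifferentiableOn ℂ h ((s \ (E : Set ℂ)) \ {z₀}) := by rwa [hset] at hd
        have hbdd : BddAbove (norm ∘ h '' ((s \ (E : Set ℂ)) \ {z₀})) := by
          refine ⟨C, ?_⟩
          rintro x ⟨w, hw, rfl⟩
          exact hb w (by rwa [hset])
        set L := limUnder (nhdsWithin z₀ {z₀}ᶜ) h with hL
        have hupd := Complex.differentiableOn_update_limUnder_of_bddAbove hmem hd' hbdd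
        -- hupd : DifferentiableOn ℂ (Function.update h z₀ L) (s \ E)
        have hb' : ∀ z ∈ s \ (E : Set ℂ), ‖Function.update h z₀ L z‖ ≤ C := by
          have hnormL : ‖L‖ ≤ C := by
            have hcont : ContinuousWithinAt (Function.update h z₀ L) (s \ (E : Set ℂ)) z₀ :=
              (hupd.continuousOn).continuousWithinAt ⟨hz₀s, by simpa using hz₀⟩
            have hne : (nhdsWithin z₀ ((s \ (E : Set ℂ)) \ {z₀})).NeBot := by
              have e2 : (s \ (E : Set ℂ)) \ {z₀} = {z₀}ᶜ ∩ (s \ (E : Set ℂ)) := by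
                ext w; simp [Set.mem_diff]; tauto
              have e : nhdsWithin z₀ ((s \ (E : Set ℂ)) \ {z₀}) = nhdsWithin z₀ {z₀}ᶜ := by
                rw [e2, nhdsWithin_inter_of_mem' (mem_nhdsWithin_of_mem_nhds hmem)]
              rw [e]
              exact NormedField.nhdsNE_neBot z₀
            have htend : Filter.Tendsto (Function.update h z₀ L)
                (nhdsWithin z₀ ((s \ (E : Set ℂ)) \ {z₀})) (nhds L) := by
              have h1 := hcont.tendsto
              rw [Function.update_self] at h1
              exact h1.mono_left (nhdsWithin_mono _ Set.diff_subset)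
            have htendh : Filter.Tendsto h (nhdsWithin z₀ ((s \ (E : Set ℂ)) \ {z₀})) (nhds L) :=
              htend.congr' (by
                filter_upwards [self_mem_nhdsWithin] with w hw
                exact Function.update_of_ne hw.2 _ _)
            refine le_of_tendsto htendh.norm ?_
            filter_upwards [self_mem_nhdsWithin] with w hw
            exact hb w (by rw [hset]; exact hw)
          intro z hz
          by_cases hzz : z = z₀
          · rw [hzz, Function.update_self]
            exact hnormL
          · rw [Function.update_of_ne hzz]
            exact hb z (by rw [hset]; exact ⟨hz, hzz⟩)
        obtain ⟨g, hgd, hgeq⟩ := ih s hs (Function.update h z₀ L) C hupd hb'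
        refine ⟨g, hgd, ?_⟩
        intro w hw
        rw [hset] at hw
        rw [hgeq hw.1, Function.update_of_ne hw.2]
      · have hset : s \ ((insert z₀ E : Finset ℂ) : Set ℂ) = s \ (E : Set ℂ) := by
          ext w
          simp only [Finset.coe_insert, Set.mem_diff, Set.mem_insert_iff, Finset.mem_coe]
          constructor
          · rintro ⟨hws, hw⟩; exact ⟨hws, fun hc => hw (Or.inr hc)⟩
          · rintro ⟨hws, hw⟩
            refine ⟨hws, fun hc => ?_⟩
            rcases hc with rfl | hc
            exacts [hz₀s hws, hw hc]
        rw [hset] at hd hb ⊢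
        exact ih s hs h C hd hb

lemma zeros_lemma {F : ℂ → ℂ}
    (hFc : ContinuousOn F (Metric.closedBall 0 1)) (hFd : DifferentiableOn ℂ F (Metric.ball 0 1))
    (hFb : ∀ z ∈ Metric.sphere (0:ℂ) 1, ‖F z‖ = 1) :
    ∃ r : ℝ, 0 < r ∧ r < 1 ∧ {z ∈ Metric.closedBall (0:ℂ) 1 | F z = 0}.Finite ∧
      ∀ z ∈ Metric.closedBall (0:ℂ) 1, r ≤ ‖z‖ → F z ≠ 0 := by
  set Z := {z ∈ Metric.closedBall (0:ℂ) 1 | F z = 0} with hZ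
  have hZclosed : IsClosed Z := by
    have : Z = Metric.closedBall (0:ℂ) 1 ∩ F ⁻¹' {0} := by
      ext z; simp [hZ, Set.mem_setOf_eq]
    rw [this]
    exact hFc.preimage_isClosed_of_isClosed Metric.isClosed_closedBall isClosed_singleton
  have hZcompact : IsCompact Z :=
    (isCompact_closedBall (0:ℂ) 1).of_isClosed_subset hZclosed (fun z hz => hz.1)
  have hZlt : ∀ z ∈ Z, ‖z‖ < 1 := by
    intro z hz
    rcases lt_or_eq_of_le (mem_closedBall_zero_iff.mp hz.1) with h | h
    · exact h
    · exfalso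
      have hsph : z ∈ Metric.sphere (0:ℂ) 1 := by rwa [mem_sphere_zero_iff_norm]
      have h1 := hFb z hsph
      rw [hz.2, norm_zero] at h1
      exact one_ne_zero h1.symm
  -- radius r
  have hr : ∃ r : ℝ, 0 < r ∧ r < 1 ∧ ∀ z ∈ Z, ‖z‖ < r := by
    rcases Z.eq_empty_or_nonempty with hne | hne
    · exact ⟨1/2, by norm_num, by norm_num, by simp [hne]⟩
    · obtain ⟨z₀, hz₀Z, hz₀max⟩ := hZcompact.exists_isMaxOn hne
        ((continuous_norm).continuousOn)
      refine ⟨(1 + ‖z₀‖)/2, by positivity, by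
        have := hZlt z₀ hz₀Z; linarith, ?_⟩
      intro z hz
      have h1 := hz₀max hz
      have h2 := hZlt z₀ hz₀Z
      simp only [Set.mem_setOf_eq] at h1
      linarith
  obtain ⟨r, hr0, hr1, hrZ⟩ := hr
  have hnonzero : ∀ z ∈ Metric.closedBall (0:ℂ) 1, r ≤ ‖z‖ → F z ≠ 0 := by
    intro z hzb hzr hF0
    exact absurd (hrZ z ⟨hzb, hF0⟩) (not_lt.mpr hzr)
  refine ⟨r, hr0, hr1, ?_, hnonzero⟩
  -- finiteness via isolated zeros
  by_contra hinf
  have hZinf : Z.Infinite := hinf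
  obtain ⟨x, hxmem, hacc⟩ := hZinf.exists_accPt_of_subset_isCompact
    (isCompact_closedBall (0:ℂ) 1) (fun z hz => hz.1)
  have hfreq0 : ∃ᶠ z in nhds x, z ≠ x ∧ z ∈ Z := accPt_iff_frequently.mp hacc
  have hfreq : ∃ᶠ z in nhdsWithin x {x}ᶜ, z ∈ Z := by
    rw [frequently_nhdsWithin_iff]
    exact hfreq0.mono (fun z hz => ⟨hz.2, hz.1⟩)
  have hxZ : x ∈ Z := by
    rw [← hZclosed.closure_eq]
    exact mem_closure_iff_frequently.mpr (hfreq0.mono (fun z hz => hz.2))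
  have hxball : x ∈ Metric.ball (0:ℂ) 1 := mem_ball_zero_iff.mpr (hZlt x hxZ)
  have hA : AnalyticOnNhd ℂ F (Metric.ball (0:ℂ) 1) := hFd.analyticOnNhd isOpen_ball
  have hzero : Set.EqOn F 0 (Metric.ball (0:ℂ) 1) :=
    hA.eqOn_zero_of_preconnected_of_frequently_eq_zero
      (convex_ball (0:ℂ) 1).isPreconnected hxball
      (hfreq.mono (fun z hz => hz.2))
  have hzero' : Set.EqOn F 0 (Metric.closedBall (0:ℂ) 1) := by
    have hcl : closure (Metric.ball (0:ℂ) 1) = Metric.closedBall 0 1 := closure_ball _ one_ne_zero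
    exact hzero.of_subset_closure hFc continuousOn_const Metric.ball_subset_closedBall
      (by rw [← hcl])
  have h1 : (1:ℂ) ∈ Metric.sphere (0:ℂ) 1 := by
    rw [mem_sphere_zero_iff_norm, norm_one]
  have := hFb 1 h1
  rw [hzero' (Metric.sphere_subset_closedBall h1), Pi.zero_apply, norm_zero] at this
  exact one_ne_zero this.symm

lemma circle_integral_zero {g : ℂ → ℂ} (hg : DifferentiableOn ℂ g (Metric.ball (0:ℂ) 1))
    {ρ : ℝ} (h0 : 0 < ρ) (h1 : ρ < 1) (m : ℕ) :
    ∫ θ in (0:ℝ)..2*π, g (ρ * Complex.exp (Complex.I * θ))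
      * Complex.exp (Complex.I * (m+1) * θ) = 0 := by
  have hsub : Metric.closedBall (0:ℂ) ρ ⊆ Metric.ball (0:ℂ) 1 := by
    intro z hz
    rw [Metric.mem_closedBall] at hz
    rw [Metric.mem_ball]
    linarith
  set f : ℂ → ℂ := fun z => g z * z ^ m with hf
  have hfc : ContinuousOn f (Metric.closedBall (0:ℂ) ρ) :=
    ((hg.continuousOn.mono hsub).mul (continuousOn_pow m))
  have hfd : ∀ z ∈ Metric.ball (0:ℂ) ρ \ (∅ : Set ℂ), DifferentiableAt ℂ f z := by
    intro z hz
    have hz1 : z ∈ Metric.ball (0:ℂ) 1 :=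
      hsub (Metric.ball_subset_closedBall hz.1)
    exact ((hg.differentiableAt (isOpen_ball.mem_nhds hz1)).mul (differentiableAt_pow m))
  have hzero := Complex.circleIntegral_eq_zero_of_differentiable_on_off_countable h0.le
    Set.countable_empty hfc hfd
  rw [circleIntegral] at hzero
  simp only [deriv_circleMap] at hzero
  have hmap : ∀ θ : ℝ, circleMap 0 ρ θ = (ρ:ℂ) * Complex.exp (Complex.I * θ) := by
    intro θ
    rw [circleMap]
    rw [show (θ:ℂ) * Complex.I = Complex.I * θ by ring]
    ring
  have key : ∀ θ : ℝ, (circleMap 0 ρ θ * Complex.I) • f (circleMap 0 ρ θ)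
      = (Complex.I * ρ^(m+1)) * (g ((ρ:ℂ) * Complex.exp (Complex.I * θ))
        * Complex.exp (Complex.I * (m+1) * θ)) := by
    intro θ
    rw [smul_eq_mul, hmap, hf]
    have hpow : Complex.exp (Complex.I * (m+1) * θ)
        = Complex.exp (Complex.I * θ) ^ (m+1) := by
      rw [← Complex.exp_nat_mul]
      congr 1
      push_cast
      ring
    rw [hpow]
    ring
  rw [intervalIntegral.integral_congr (g := fun θ : ℝ => (Complex.I * ρ^(m+1))
    * (g ((ρ:ℂ) * Complex.exp (Complex.I * θ)) * Complex.exp (Complex.I * (m+1) * θ)))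
    (fun θ _ => key θ)] at hzero
  rw [intervalIntegral.integral_const_mul] at hzero
  have hne : (Complex.I * (ρ:ℂ)^(m+1)) ≠ 0 := by
    apply mul_ne_zero Complex.I_ne_zero
    apply pow_ne_zero
    exact_mod_cast h0.ne'
  exact (mul_eq_zero.mp hzero).resolve_left hne

end L26

open L26 Complex Set Filter Metric Function intervalIntegral
open scoped ContDiff Interval

/-- **Core of Lemma 2.6 of the paper.** Let `ψ = e^{ib}` be an orientation-preserving
circle diffeomorphism. If for some `n ≥ 2` both `ψⁿ = e^{inb}` and `ψ^{n+1} = e^{i(n+1)b}`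
have vanishing negative Fourier coefficients, then so does `ψ` itself. -/
theorem negative_coefficients_vanish_of_powers
    (b : ℝ → ℝ) (hb : ContDiff ℝ (⊤ : ℕ∞) b)
    (hper : ∀ θ, b (θ + 2 * Real.pi) = b θ + 2 * Real.pi)
    (hb' : ∀ θ, 0 < deriv b θ)
    (n : ℤ) (hn : 2 ≤ n)
    (hvan : ∀ m : ℤ, m = n ∨ m = n + 1 →
      ∀ k : ℤ, k < 0 → fCoef (fun θ => Complex.exp (Complex.I * m * b θ)) k = 0) :
    ∀ k : ℤ, k < 0 → fCoef (fun θ => Complex.exp (Complex.I * b θ)) k = 0 := by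
  intro k hk
  have hbs : ContDiff ℝ ∞ b := hb.of_le (by simp)
  -- smoothness and periodicity of the powers
  have hsm : ∀ m : ℤ, ContDiff ℝ ∞ (fun θ => Complex.exp (Complex.I * m * b θ)) := by
    intro m
    have h1 : ContDiff ℝ ∞ (fun θ => ((b θ : ℂ))) := Complex.ofRealCLM.contDiff.comp hbs
    exact Complex.contDiff_exp.comp (contDiff_const.mul h1)
  have hpm : ∀ m : ℤ, Function.Periodic (fun θ => Complex.exp (Complex.I * m * b θ)) (2*π) := by
    intro m θ
    simp only
    rw [hper θ]
    rw [show (Complex.I * m * ((b θ + 2*π : ℝ) : ℂ))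
      = Complex.I * m * ((b θ : ℝ):ℂ) + m * (2 * π * Complex.I) by push_cast; ring]
    rw [Complex.exp_add, Complex.exp_int_mul_two_pi_mul_I, mul_one]
  set N : ℕ := n.toNat with hNdef
  have hNn : (N:ℤ) = n := Int.toNat_of_nonneg (by linarith)
  have hN2 : 2 ≤ N := by omega
  have hNC : ((N:ℂ)) = (n:ℂ) := by exact_mod_cast congrArg (Int.cast : ℤ → ℂ) hNn
  obtain ⟨F, hFc, hFd, hFbd⟩ := disc_ext (hsm n) (hpm n)
    (fun k' hk' => hvan n (Or.inl rfl) k' hk')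
  obtain ⟨G, hGc, hGd, hGbd⟩ := disc_ext (hsm (n+1)) (hpm (n+1))
    (fun k' hk' => hvan (n+1) (Or.inr rfl) k' hk')
  -- sphere parametrization
  have hsphere : ∀ z ∈ Metric.sphere (0:ℂ) 1, ∃ θ : ℝ, z = Complex.exp (Complex.I * θ) := by
    intro z hz
    rw [mem_sphere_zero_iff_norm] at hz
    obtain ⟨θ, hθ⟩ := (Complex.norm_eq_one_iff z).mp hz
    exact ⟨θ, by rw [← hθ]; ring_nf⟩
  have hFs : ∀ z ∈ Metric.sphere (0:ℂ) 1, ‖F z‖ = 1 := by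
    intro z hz
    obtain ⟨θ, rfl⟩ := hsphere z hz
    rw [hFbd θ]
    exact norm_exp_I_int_mul n (b θ)
  -- the key functional equation  G ^ N = F ^ (N + 1)
  have key : Set.EqOn (fun z => G z ^ N) (fun z => F z ^ (N+1)) (Metric.closedBall (0:ℂ) 1) := by
    apply eqOn_closedBall_of_eqOn_sphere (hGc.pow N) (hGd.pow N) (hFc.pow (N+1)) (hFd.pow (N+1))
    intro z hz
    obtain ⟨θ, rfl⟩ := hsphere z hz
    simp only [Pi.pow_apply]
    rw [hFbd θ, hGbd θ, ← Complex.exp_nat_mul, ← Complex.exp_nat_mul]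
    congr 1
    push_cast
    rw [hNC]
    ring
  -- bound for F
  obtain ⟨MF, hMF⟩ := (isCompact_closedBall (0:ℂ) 1).exists_bound_of_continuousOn hFc
  -- zeros of F
  obtain ⟨r, hr0, hr1, hZfin, hFne⟩ := zeros_lemma hFc hFd hFs
  set E : Finset ℂ := hZfin.toFinset with hE
  have hmemE : ∀ z : ℂ, z ∈ E ↔ (z ∈ Metric.closedBall (0:ℂ) 1 ∧ F z = 0) := by
    intro z
    rw [hE, Set.Finite.mem_toFinset]
    exact Iff.rfl
  have hFnz : ∀ z ∈ Metric.ball (0:ℂ) 1 \ (E : Set ℂ), F z ≠ 0 := by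
    rintro z ⟨hz1, hz2⟩ h0
    exact hz2 (Finset.mem_coe.mpr ((hmemE z).mpr ⟨Metric.ball_subset_closedBall hz1, h0⟩))
  set h : ℂ → ℂ := fun z => G z / F z with hh
  have hd : DifferentiableOn ℂ h (Metric.ball (0:ℂ) 1 \ (E : Set ℂ)) :=
    (hGd.mono Set.diff_subset).div (hFd.mono Set.diff_subset) hFnz
  set C : ℝ := max 1 MF with hC
  have hnormh : ∀ z ∈ Metric.ball (0:ℂ) 1 \ (E : Set ℂ), ‖h z‖ ^ N = ‖F z‖ := by
    intro z hz
    have hFz := hFnz z hz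
    have hFzn : ‖F z‖ ≠ 0 := norm_ne_zero_iff.mpr hFz
    have hkey : G z ^ N = F z ^ (N+1) := key (Metric.ball_subset_closedBall hz.1)
    have hdiv : ‖h z‖ = ‖G z‖ / ‖F z‖ := by simp only [hh]; exact norm_div _ _
    rw [hdiv, div_pow, ← norm_pow, ← norm_pow, hkey, norm_pow, norm_pow, pow_succ,
      mul_comm (‖F z‖^N) (‖F z‖), mul_div_assoc, div_self (pow_ne_zero N hFzn), mul_one]
  have hbound : ∀ z ∈ Metric.ball (0:ℂ) 1 \ (E : Set ℂ), ‖h z‖ ≤ C := by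
    intro z hz
    have h1 := hnormh z hz
    have h2 : ‖F z‖ ≤ MF := hMF z (Metric.ball_subset_closedBall hz.1)
    rcases le_or_gt ‖h z‖ 1 with hle | hlt
    · exact le_trans hle (le_max_left _ _)
    · have h3 : ‖h z‖ ≤ ‖h z‖ ^ N := le_self_pow₀ hlt.le (by omega)
      rw [h1] at h3
      exact le_trans (le_trans h3 h2) (le_max_right _ _)
  obtain ⟨g, hgd, hgeq⟩ := removable_finite E (Metric.ball (0:ℂ) 1) isOpen_ball h C hd hbound
  -- the exponent
  set m : ℕ := (-k-1).toNat with hmdef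
  have hmk : (m:ℤ) = -k - 1 := Int.toNat_of_nonneg (by omega)
  have hmC : ((m:ℂ)) + 1 = -(k:ℂ) := by
    have h5 : ((m:ℤ):ℂ) = ((-k-1:ℤ):ℂ) := by exact_mod_cast congrArg (Int.cast : ℤ → ℂ) hmk
    push_cast at h5
    linear_combination h5
  -- the family of integrals
  set q : ℂ → ℂ := fun z => G z / F z with hq
  set K : ℝ → ℂ := fun ρ => ∫ θ in (0:ℝ)..2*π,
    q ((ρ:ℂ) * Complex.exp (Complex.I * θ)) * Complex.exp (Complex.I * (m+1) * θ) with hKdef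
  have hnormz : ∀ (ρ θ : ℝ), 0 ≤ ρ → ‖(ρ:ℂ) * Complex.exp (Complex.I * θ)‖ = ρ := by
    intro ρ θ hρ
    rw [norm_mul, norm_exp_I_mul, mul_one, Complex.norm_real, Real.norm_eq_abs,
      _root_.abs_of_nonneg hρ]
  -- Claim A : K ρ = 0 for r ≤ ρ < 1
  have claimA : ∀ ρ : ℝ, r ≤ ρ → ρ < 1 → K ρ = 0 := by
    intro ρ hρr hρ1
    have h0ρ : (0:ℝ) < ρ := lt_of_lt_of_le hr0 hρr
    have hcz := circle_integral_zero hgd h0ρ hρ1 m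
    rw [hKdef]
    simp only
    rw [← hcz]
    apply intervalIntegral.integral_congr
    intro θ _
    beta_reduce
    have hzn : ‖(ρ:ℂ) * Complex.exp (Complex.I * θ)‖ = ρ := hnormz ρ θ h0ρ.le
    have hzmem : (ρ:ℂ) * Complex.exp (Complex.I * θ) ∈ Metric.ball (0:ℂ) 1 \ (E : Set ℂ) := by
      constructor
      · rw [mem_ball_zero_iff, hzn]; exact hρ1
      · intro hmem
        have h6 := (hmemE _).mp hmem
        exact hFne _ h6.1 (by rw [hzn]; exact hρr) h6.2
    rw [hgeq hzmem]
  -- Claim B : continuity at ρ = 1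
  set A : Set ℂ := Metric.closedBall (0:ℂ) 1 \ Metric.ball 0 r with hA
  have hAmem : ∀ (ρ θ : ℝ), r ≤ ρ → ρ ≤ 1 → (ρ:ℂ) * Complex.exp (Complex.I * θ) ∈ A := by
    intro ρ θ hρr hρ1
    have h0ρ : (0:ℝ) ≤ ρ := le_trans hr0.le hρr
    constructor
    · rw [mem_closedBall_zero_iff, hnormz ρ θ h0ρ]; exact hρ1
    · rw [mem_ball_zero_iff, hnormz ρ θ h0ρ]; exact not_lt.mpr hρr
  have hqA : ContinuousOn q A := by
    apply (hGc.mono Set.diff_subset).div (hFc.mono Set.diff_subset)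
    intro z hz
    exact hFne z hz.1 (not_lt.mp (fun hc => hz.2 (mem_ball_zero_iff.mpr hc)))
  have hAcompact : IsCompact A := (isCompact_closedBall (0:ℂ) 1).of_isClosed_subset
    (Metric.isClosed_closedBall.sdiff Metric.isOpen_ball) Set.diff_subset
  obtain ⟨Cq, hCq⟩ := hAcompact.exists_bound_of_continuousOn hqA
  have hIoo : Set.Ioo r 1 ∈ nhdsWithin (1:ℝ) (Set.Iio 1) :=
    Ioo_mem_nhdsLT_of_mem ⟨hr1, le_refl 1⟩
  have hexp1 : ∀ θ : ℝ, ‖Complex.exp (Complex.I * (m+1) * θ)‖ = 1 := by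
    intro θ
    rw [show Complex.I * ((m:ℂ)+1) * (θ:ℂ) = Complex.I * ((((m:ℝ)+1)*θ : ℝ):ℂ) by push_cast; ring,
      norm_exp_I_mul]
  have claimB : Filter.Tendsto K (nhdsWithin (1:ℝ) (Set.Iio 1)) (nhds (K 1)) := by
    rw [hKdef]
    simp only
    apply intervalIntegral.tendsto_integral_filter_of_dominated_convergence (fun _ => Cq)
    · filter_upwards [hIoo] with ρ hρ
      apply Continuous.aestronglyMeasurable
      apply Continuous.mul
      · apply hqA.comp_continuous
        · exact continuous_const.mul (Complex.continuous_exp.comp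
            (continuous_const.mul Complex.continuous_ofReal))
        · intro θ
          exact hAmem ρ θ hρ.1.le hρ.2.le
      · exact Complex.continuous_exp.comp (continuous_const.mul Complex.continuous_ofReal)
    · filter_upwards [hIoo] with ρ hρ
      apply MeasureTheory.ae_of_all
      intro θ _
      rw [norm_mul, hexp1 θ, mul_one]
      exact hCq _ (hAmem ρ θ hρ.1.le hρ.2.le)
    · exact intervalIntegrable_const
    · apply MeasureTheory.ae_of_all
      intro θ _
      apply Filter.Tendsto.mul_const
      have hmem1 : (1:ℂ) * Complex.exp (Complex.I * θ) ∈ A := hAmem 1 θ hr1.le le_rfl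
      have hpath : Filter.Tendsto (fun ρ:ℝ => (ρ:ℂ) * Complex.exp (Complex.I * θ))
          (nhdsWithin (1:ℝ) (Set.Iio 1)) (nhds ((1:ℂ) * Complex.exp (Complex.I * θ))) := by
        apply Filter.Tendsto.mono_left _ nhdsWithin_le_nhds
        exact (Complex.continuous_ofReal.tendsto 1).mul_const _
      have hpathA : Filter.Tendsto (fun ρ:ℝ => (ρ:ℂ) * Complex.exp (Complex.I * θ))
          (nhdsWithin (1:ℝ) (Set.Iio 1))
          (nhdsWithin ((1:ℂ) * Complex.exp (Complex.I * θ)) A) := by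
        rw [tendsto_nhdsWithin_iff]
        refine ⟨hpath, ?_⟩
        filter_upwards [hIoo] with ρ hρ
        exact hAmem ρ θ hρ.1.le hρ.2.le
      have := (hqA _ hmem1).tendsto.comp hpathA
      simpa [Function.comp_def] using this
  -- conclude K 1 = 0
  have hK1 : K 1 = 0 := by
    apply tendsto_nhds_unique claimB
    apply Filter.Tendsto.congr' _ tendsto_const_nhds
    filter_upwards [hIoo] with ρ hρ
    exact (claimA ρ hρ.1.le hρ.2).symm
  -- identify K 1 with the Fourier integral
  have hident : (∫ θ in (0:ℝ)..2*π, Complex.exp (Complex.I * b θ)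
      * Complex.exp (-Complex.I * k * θ)) = K 1 := by
    rw [hKdef]
    simp only
    apply intervalIntegral.integral_congr
    intro θ _
    beta_reduce
    have e1 : q (((1:ℝ):ℂ) * Complex.exp (Complex.I * θ)) = Complex.exp (Complex.I * ((b θ : ℝ):ℂ)) := by
      simp only [hq, Complex.ofReal_one, one_mul]
      rw [hGbd θ, hFbd θ, ← Complex.exp_sub]
      congr 1
      push_cast
      ring
    have e2 : Complex.exp (Complex.I * ((m:ℂ)+1) * θ) = Complex.exp (-Complex.I * k * θ) := by
      congr 1
      linear_combination (Complex.I * (θ:ℂ)) * hmC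
    rw [e1, e2]
  rw [fCoef, hident, hK1, mul_zero]
end
end

section
/- There exists a constant c₁ > 0 such that for every C^∞, 2π-periodic, real-valued function a : ℝ → ℝ one has Z₁(a) ≥ c₁·∑_{n=2}^∞ n³·|â(n)|². -/
open MeasureTheory Real

noncomputable section

/-- `prodPoly m j n = n(n+j₁)(n+j₁+j₂)⋯(n+j₁+⋯+j_{m-1})`. -/
def prodPoly (m : ℕ) (j : Fin m → ℤ) (n : ℤ) : ℤ :=
  ∏ i : Fin m, (n + ∑ l ∈ Finset.Iio i, j l)

/-- The coefficient `N_{j₁…j_m} = ∑ₙ (|n(n+j₁)⋯(n+j₁+⋯+j_{m-1})| - n(n+j₁)⋯(n+j₁+⋯+j_{m-1}))`;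
only finitely many summands are nonzero. -/
def Ncoef (m : ℕ) (j : Fin m → ℤ) : ℝ :=
  ∑' n : ℤ, ((|prodPoly m j n| - prodPoly m j n : ℤ) : ℝ)

/-- A term of the series defining the zeta-invariant `Z_k(a)`:
`N_{j₁…j_{2k}} â(j₁)⋯â(j_{2k})` for `j₁+⋯+j_{2k} = 0`. -/
def zetaTerm (k : ℕ) (a : ℝ → ℝ) (j : {j : Fin (2 * k) → ℤ // ∑ i, j i = 0}) : ℂ :=
  (Ncoef (2 * k) j.val : ℂ) * ∏ i, fCoef (fun θ => (a θ : ℂ)) (j.val i)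

/-- The zeta-invariant `Z_k(a) = ∑_{j₁+⋯+j_{2k}=0} N_{j₁…j_{2k}} â(j₁)⋯â(j_{2k})`. -/
def ZetaInv (k : ℕ) (a : ℝ → ℝ) : ℂ :=
  ∑' j : {j : Fin (2 * k) → ℤ // ∑ i, j i = 0}, zetaTerm k a j

/-! ### Auxiliary lemmas -/

lemma intervalIntegral_conj' {f : ℝ → ℂ} {a b : ℝ} :
    (∫ x in a..b, (starRingEnd ℂ) (f x)) = (starRingEnd ℂ) (∫ x in a..b, f x) := by
  simp only [intervalIntegral, ← integral_conj, map_sub]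

lemma fCoef_neg (a : ℝ → ℝ) (m : ℤ) :
    fCoef (fun θ => (a θ:ℂ)) (-m) = (starRingEnd ℂ) (fCoef (fun θ => (a θ:ℂ)) m) := by
  unfold fCoef
  rw [map_mul, ← intervalIntegral_conj']
  congr 1
  · simp [map_inv₀, map_mul, Complex.conj_ofReal, map_ofNat]
  · refine intervalIntegral.integral_congr fun θ _ => ?_
    rw [map_mul, ← Complex.exp_conj]
    simp only [Complex.conj_ofReal]
    congr 1
    simp only [map_mul, map_neg, Complex.conj_I, Complex.conj_ofReal, map_intCast]
    push_cast
    ring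

lemma fCoef_norm_le (u : ℝ → ℂ) {C : ℝ} (hC : ∀ θ ∈ Set.uIoc (0:ℝ) (2*Real.pi), ‖u θ‖ ≤ C)
    (m : ℤ) : ‖fCoef u m‖ ≤ C := by
  unfold fCoef
  rw [norm_mul]
  have h1 : ‖((((2 * Real.pi)⁻¹ : ℝ)) : ℂ)‖ = (2*Real.pi)⁻¹ := by
    rw [Complex.norm_real, Real.norm_eq_abs, abs_of_pos (by positivity)]
  have h2 : ‖∫ θ in (0:ℝ)..(2*Real.pi), u θ * Complex.exp (-Complex.I * m * θ)‖
      ≤ C * |2*Real.pi - 0| := by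
    apply intervalIntegral.norm_integral_le_of_norm_le_const
    intro x hx
    rw [norm_mul]
    have : ‖Complex.exp (-Complex.I * m * x)‖ = 1 := by
      rw [Complex.norm_exp]
      simp
    rw [this, mul_one]
    exact hC x hx
  calc ‖((((2 * Real.pi)⁻¹ : ℝ)) : ℂ)‖ * ‖∫ θ in (0:ℝ)..(2*Real.pi), u θ * Complex.exp (-Complex.I * m * θ)‖
      ≤ (2*Real.pi)⁻¹ * (C * |2*Real.pi - 0|) := by
        rw [h1]
        apply mul_le_mul_of_nonneg_left h2
        positivity
    _ = C := by
        rw [sub_zero, abs_of_pos (by positivity : (0:ℝ) < 2*Real.pi)]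
        field_simp

lemma periodic_deriv' (f : ℝ → ℂ) (hp : Function.Periodic f (2*Real.pi)) :
    Function.Periodic (deriv f) (2*Real.pi) := by
  intro x
  rw [← deriv_comp_add_const]
  congr 1
  funext y
  exact hp y

lemma fCoef_eq_deriv (f : ℝ → ℂ) (hf : ContDiff ℝ ((⊤:ℕ∞)) f)
    (hp : Function.Periodic f (2*Real.pi)) (m : ℤ) (hm : m ≠ 0) :
    fCoef f m = fCoef (deriv f) m / (Complex.I * m) := by
  have hm' : (m:ℂ) ≠ 0 := Int.cast_ne_zero.mpr hm
  set c : ℂ := -Complex.I * m with hc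
  have hc0 : c ≠ 0 := by
    simp [hc, Complex.I_ne_zero, hm']
  have hderivexp : ∀ θ : ℝ, HasDerivAt (fun t : ℝ => Complex.exp (c * t)) (c * Complex.exp (c * θ)) θ := by
    intro θ
    have h1 : HasDerivAt (fun z : ℂ => Complex.exp (c * z)) (c * Complex.exp (c * θ)) (θ:ℂ) := by
      simpa [mul_comm] using ((hasDerivAt_id (θ:ℂ)).const_mul c).cexp
    exact h1.comp_ofReal
  have hfd : Differentiable ℝ f := hf.differentiable (by simp)
  have hcont : Continuous (deriv f) := (contDiff_infty_iff_deriv.mp hf).2.continuous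
  have key := intervalIntegral.integral_mul_deriv_eq_deriv_mul
    (u := f) (u' := deriv f) (v := fun θ : ℝ => Complex.exp (c * θ) / c)
    (v' := fun θ : ℝ => Complex.exp (c * θ)) (a := 0) (b := 2*Real.pi)
    (fun x _ => (hfd x).hasDerivAt)
    (fun x _ => by simpa [mul_div_cancel_left₀ _ hc0] using (hderivexp x).div_const c)
    (hcont.intervalIntegrable _ _)
    ((Complex.continuous_exp.comp (by continuity)).intervalIntegrable _ _)
  have hexp2pi : Complex.exp (c * ((2*Real.pi:ℝ):ℂ)) = 1 := by
    have := Complex.exp_int_mul_two_pi_mul_I (-m)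
    rw [← this]
    congr 1
    push_cast
    ring
  have hfper : f (2*Real.pi) = f 0 := by simpa using hp 0
  have hint : (∫ θ in (0:ℝ)..(2*Real.pi), f θ * Complex.exp (c * θ))
      = -∫ θ in (0:ℝ)..(2*Real.pi), deriv f θ * (Complex.exp (c * θ) / c) := by
    beta_reduce at key
    rw [key, hexp2pi, hfper]
    simp [Complex.exp_zero]
  have hIc : Complex.I * m = -c := by rw [hc]; ring
  unfold fCoef
  rw [hIc]
  calc (2*Real.pi:ℝ)⁻¹ * ∫ θ in (0:ℝ)..(2*Real.pi), f θ * Complex.exp (-Complex.I * m * θ)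
      = (2*Real.pi:ℝ)⁻¹ * ∫ θ in (0:ℝ)..(2*Real.pi), f θ * Complex.exp (c * θ) := by
        congr 1
    _ = (2*Real.pi:ℝ)⁻¹ * -∫ θ in (0:ℝ)..(2*Real.pi), deriv f θ * (Complex.exp (c * θ) / c) := by rw [hint]
    _ = ((2*Real.pi:ℝ)⁻¹ * ∫ θ in (0:ℝ)..(2*Real.pi), deriv f θ * Complex.exp (c * θ)) / (-c) := by
        have h2 : (∫ θ in (0:ℝ)..(2*Real.pi), deriv f θ * (Complex.exp (c * θ) / c))
            = (∫ θ in (0:ℝ)..(2*Real.pi), deriv f θ * Complex.exp (c * θ)) / c := by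
          rw [← intervalIntegral.integral_div]
          exact intervalIntegral.integral_congr fun θ _ => (mul_div_assoc _ _ _).symm
        rw [h2]
        field_simp
    _ = ((2*Real.pi:ℝ)⁻¹ * ∫ θ in (0:ℝ)..(2*Real.pi), deriv f θ * Complex.exp (-Complex.I * m * θ)) / (-c) := by
        congr 2

lemma fCoef_decay (f : ℝ → ℂ) (hf : ContDiff ℝ ((⊤:ℕ∞)) f)
    (hp : Function.Periodic f (2*Real.pi)) :
    ∃ C : ℝ, 0 ≤ C ∧ ∀ m : ℤ, m ≠ 0 → ‖fCoef f m‖ ≤ C / |(m:ℝ)|^3 := by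
  have hf1 := (contDiff_infty_iff_deriv.mp hf).2
  have hf2 := (contDiff_infty_iff_deriv.mp hf1).2
  have hf3 := (contDiff_infty_iff_deriv.mp hf2).2
  have hp1 := periodic_deriv' f hp
  have hp2 := periodic_deriv' _ hp1
  obtain ⟨C, hC⟩ := (isCompact_Icc (a := (0:ℝ)) (b := 2*Real.pi)).exists_bound_of_continuousOn
    (hf3.continuous.continuousOn (s := Set.Icc 0 (2*Real.pi)))
  refine ⟨max C 0, le_max_right _ _, fun m hm => ?_⟩
  have hC' : ∀ θ ∈ Set.uIoc (0:ℝ) (2*Real.pi), ‖deriv (deriv (deriv f)) θ‖ ≤ max C 0 := by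
    intro θ hθ
    have hsub : θ ∈ Set.Icc (0:ℝ) (2*Real.pi) := by
      rw [Set.uIoc_of_le (by positivity)] at hθ
      exact Set.Ioc_subset_Icc_self hθ
    exact le_trans (hC θ hsub) (le_max_left _ _)
  have h3 : ‖fCoef (deriv (deriv (deriv f))) m‖ ≤ max C 0 := fCoef_norm_le _ hC' m
  have e1 := fCoef_eq_deriv f hf hp m hm
  have e2 := fCoef_eq_deriv _ hf1 hp1 m hm
  have e3 := fCoef_eq_deriv _ hf2 hp2 m hm
  have hnorm : ‖(Complex.I * (m:ℂ))‖ = |(m:ℝ)| := by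
    rw [norm_mul, Complex.norm_I, one_mul]
    exact_mod_cast Complex.norm_intCast m
  have habs : (0:ℝ) < |(m:ℝ)| := by
    simp only [abs_pos]
    exact_mod_cast hm
  rw [e1, e2, e3]
  rw [norm_div, norm_div, norm_div, hnorm]
  rw [div_div, div_div]
  rw [div_le_div_iff₀ (by positivity) (by positivity)]
  calc ‖fCoef (deriv (deriv (deriv f))) m‖ * |(m:ℝ)|^3
      ≤ max C 0 * |(m:ℝ)|^3 := by
        apply mul_le_mul_of_nonneg_right h3 (by positivity)
    _ = max C 0 * (|(m:ℝ)| * (|(m:ℝ)| * |(m:ℝ)|)) := by ring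

lemma prodPoly_two (j : Fin 2 → ℤ) (n : ℤ) : prodPoly 2 j n = n * (n + j 0) := by
  unfold prodPoly
  rw [Fin.prod_univ_two]
  congr 1
  · rw [show (Finset.Iio (0 : Fin 2)) = ∅ by decide]; simp
  · rw [show (Finset.Iio (1 : Fin 2)) = {0} by decide]; simp

lemma sumA (K : ℕ) : ∑ i ∈ Finset.range K, (2*((i:ℤ)+1)) = K^2 + K := by
  induction K with
  | zero => simp
  | succ K ih => rw [Finset.sum_range_succ, ih]; push_cast; ring

lemma sumB (K : ℕ) : 3 * ∑ i ∈ Finset.range K, (2*((i:ℤ)+1)*((K:ℤ)-i)) = ((K:ℤ)+1)^3 - ((K:ℤ)+1) := by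
  induction K with
  | zero => simp
  | succ K ih =>
    push_cast
    rw [Finset.sum_range_succ]
    have hcongr : ∑ i ∈ Finset.range K, (2*((i:ℤ)+1)*(((K:ℤ)+1)-(i:ℤ)))
        = ∑ i ∈ Finset.range K, (2*((i:ℤ)+1)*((K:ℤ)-(i:ℤ)) + 2*((i:ℤ)+1)) :=
      Finset.sum_congr rfl (fun i _ => by ring)
    rw [hcongr, Finset.sum_add_distrib, sumA]
    linear_combination ih

lemma negSubOne_inj : Function.Injective (fun i : ℕ => -(i:ℤ)-1) :=
  fun a b h => by simpa using h

lemma Ioo_map (M : ℕ) : (Finset.Ioo (-(M:ℤ)) 0) =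
    (Finset.range (M-1)).map ⟨fun i : ℕ => -(i:ℤ)-1, negSubOne_inj⟩ := by
  ext x
  simp only [Finset.mem_Ioo, Finset.mem_map, Finset.mem_range, Function.Embedding.coeFn_mk]
  constructor
  · intro ⟨h1, h2⟩
    refine ⟨(-x-1).toNat, by omega, by omega⟩
  · rintro ⟨i, hi, rfl⟩
    omega

lemma Ncoef_pair_nonneg (m : ℤ) (hm : 0 ≤ m) :
    Ncoef 2 ![m, -m] = (((m:ℝ))^3 - (m:ℝ))/3 := by
  unfold Ncoef
  have hpp : ∀ n : ℤ, prodPoly 2 ![m, -m] n = n * (n + m) := fun n => by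
    rw [prodPoly_two]; simp
  have hzero : ∀ n : ℤ, n ∉ Finset.Ioo (-m) 0 →
      ((|prodPoly 2 ![m, -m] n| - prodPoly 2 ![m, -m] n : ℤ) : ℝ) = 0 := by
    intro n hn
    rw [hpp]
    simp only [Finset.mem_Ioo, not_and_or, not_lt] at hn
    have : 0 ≤ n * (n + m) := by
      rcases hn with h | h
      · nlinarith [hm]
      · nlinarith [hm]
    rw [abs_of_nonneg this]
    simp
  rw [tsum_eq_sum (s := Finset.Ioo (-m) 0) hzero]
  lift m to ℕ using hm with M
  rw [Ioo_map, Finset.sum_map]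
  simp only [Function.Embedding.coeFn_mk]
  have hterm : ∀ i ∈ Finset.range (M-1),
      ((|prodPoly 2 ![(M:ℤ), -(M:ℤ)] (-(i:ℤ)-1)| - prodPoly 2 ![(M:ℤ), -(M:ℤ)] (-(i:ℤ)-1) : ℤ) : ℝ)
      = ((2*((i:ℤ)+1)*(((M:ℤ)-1)-(i:ℤ)) : ℤ) : ℝ) := by
    intro i hi
    rw [Finset.mem_range] at hi
    rw [hpp]
    have h1 : (-(i:ℤ)-1) * ((-(i:ℤ)-1) + M) ≤ 0 := by
      apply mul_nonpos_of_nonpos_of_nonneg (by omega) (by omega)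
    rw [abs_of_nonpos h1]
    push_cast
    ring
  rw [Finset.sum_congr rfl hterm]
  rcases Nat.eq_zero_or_pos M with hM | hM
  · subst hM; simp
  · have hB := sumB (M-1)
    have hM1 : ((M-1:ℕ):ℤ) = (M:ℤ)-1 := by omega
    rw [hM1] at hB
    rw [← Int.cast_sum]
    have hBr := congrArg (fun z : ℤ => (z:ℝ)) hB
    push_cast at hBr ⊢
    linarith

lemma Ncoef_pair (m : ℤ) : Ncoef 2 ![m, -m] = ((|(m:ℝ)|)^3 - |(m:ℝ)|)/3 := by
  rcases le_or_gt 0 m with hm | hm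
  · rw [Ncoef_pair_nonneg m hm, abs_of_nonneg (by exact_mod_cast hm : (0:ℝ) ≤ (m:ℝ))]
  · have h1 : Ncoef 2 ![m, -m] = Ncoef 2 ![-m, m] := by
      unfold Ncoef
      rw [← Equiv.tsum_eq (Equiv.neg ℤ)]
      apply tsum_congr
      intro n
      have hpe : prodPoly 2 ![m, -m] ((Equiv.neg ℤ) n) = prodPoly 2 ![-m, m] n := by
        rw [prodPoly_two, prodPoly_two]
        simp only [Equiv.neg_apply, Matrix.cons_val_zero]
        ring
      rw [hpe]
    rw [h1]
    have h2 : Ncoef 2 ![-m, m] = Ncoef 2 ![-m, -(-m)] := by norm_num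
    rw [h2, Ncoef_pair_nonneg (-m) (by omega)]
    rw [abs_of_neg (by exact_mod_cast hm : (m:ℝ) < 0)]
    push_cast
    ring

def pairEquiv : ℤ ≃ {j : Fin (2*1) → ℤ // ∑ i, j i = 0} where
  toFun m := ⟨![m, -m], by simp [Fin.sum_univ_two]⟩
  invFun j := j.val 0
  left_inv m := rfl
  right_inv j := by
    apply Subtype.ext
    funext i
    have h := j.prop
    rw [Fin.sum_univ_two] at h
    fin_cases i
    · rfl
    · show -(j.val 0) = j.val 1
      omega

lemma zetaTerm_eq (a : ℝ → ℝ) (m : ℤ) :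
    zetaTerm 1 a (pairEquiv m)
      = ((((|(m:ℝ)|^3 - |(m:ℝ)|)/3) * ‖fCoef (fun θ => (a θ:ℂ)) m‖^2 : ℝ) : ℂ) := by
  unfold zetaTerm
  rw [Fin.prod_univ_two]
  show ((Ncoef 2 ![m,-m] : ℝ) : ℂ) * (fCoef _ (![m,-m] 0) * fCoef _ (![m,-m] 1)) = _
  rw [Matrix.cons_val_zero, Matrix.cons_val_one, Matrix.cons_val_zero]
  rw [Ncoef_pair, fCoef_neg, Complex.mul_conj]
  rw [Complex.normSq_eq_norm_sq]
  push_cast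
  ring

set_option maxHeartbeats 1000000 in
/-- **Estimate (3.5) of the paper.** There is a universal constant `c₁ > 0` such that
`Z₁(a) ≥ c₁ ∑_{n≥2} n³ |â(n)|²` for every smooth `2π`-periodic real-valued `a`. -/
theorem zetaInv_one_lower_bound :
    ∃ c₁ : ℝ, 0 < c₁ ∧
      ∀ a : ℝ → ℝ, ContDiff ℝ (⊤ : ℕ∞) a → Function.Periodic a (2 * Real.pi) →
        c₁ * (∑' n : ℕ, ((n : ℝ) + 2) ^ 3 *
          ‖fCoef (fun θ => (a θ : ℂ)) ((n : ℤ) + 2)‖ ^ 2) ≤ (ZetaInv 1 a).re := by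
  refine ⟨1/2, by norm_num, fun a ha hp => ?_⟩
  set A : ℝ → ℂ := fun θ => (a θ : ℂ) with hA
  have hAc : ContDiff ℝ ((⊤:ℕ∞)) A := by
    have : ContDiff ℝ (⊤ : ℕ∞) A := Complex.ofRealCLM.contDiff.comp ha
    exact this.of_le (by simp)
  have hAp : Function.Periodic A (2*Real.pi) := fun x => by simp [hA, hp x]
  obtain ⟨C, hC0, hCd⟩ := fCoef_decay A hAc hAp
  -- the real summand
  set g : ℤ → ℝ := fun m => ((|(m:ℝ)|^3 - |(m:ℝ)|)/3) * ‖fCoef A m‖^2 with hg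
  have habs1 : ∀ m : ℤ, m ≠ 0 → (1:ℝ) ≤ |(m:ℝ)| := by
    intro m hm
    have : (1:ℤ) ≤ |m| := Int.one_le_abs (by omega)
    calc (1:ℝ) ≤ ((|m|:ℤ):ℝ) := by exact_mod_cast this
      _ = |(m:ℝ)| := by push_cast; rfl
  have hg0 : ∀ m : ℤ, 0 ≤ g m := by
    intro m
    rcases eq_or_ne m 0 with rfl | hm
    · simp [hg]
    · have h1 := habs1 m hm
      have : 0 ≤ (|(m:ℝ)|^3 - |(m:ℝ)|)/3 := by
        nlinarith [mul_nonneg (mul_nonneg (by linarith : (0:ℝ) ≤ |(m:ℝ)|) (by linarith : (0:ℝ) ≤ |(m:ℝ)| - 1)) (by linarith : (0:ℝ) ≤ |(m:ℝ)| + 1)]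
      exact mul_nonneg this (by positivity)
  have hgle : ∀ m : ℤ, m ≠ 0 → g m ≤ (C^2/3) * (1/|(m:ℝ)|^3) := by
    intro m hm
    have hx1 := habs1 m hm
    have hx0 : (0:ℝ) < |(m:ℝ)| := by linarith
    have hy := hCd m hm
    have hy0 : (0:ℝ) ≤ ‖fCoef A m‖ := norm_nonneg _
    have hy2 : ‖fCoef A m‖^2 ≤ (C/|(m:ℝ)|^3)^2 := by
      apply pow_le_pow_left₀ hy0 hy
    calc g m = ((|(m:ℝ)|^3 - |(m:ℝ)|)/3) * ‖fCoef A m‖^2 := rfl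
      _ ≤ (|(m:ℝ)|^3/3) * ‖fCoef A m‖^2 := by
          apply mul_le_mul_of_nonneg_right (by linarith) (by positivity)
      _ ≤ (|(m:ℝ)|^3/3) * (C/|(m:ℝ)|^3)^2 := by
          apply mul_le_mul_of_nonneg_left hy2 (by positivity)
      _ = (C^2/3) * (1/|(m:ℝ)|^3) := by
          field_simp
  -- summability of g over ℤ
  have hsum_nat : Summable (fun n : ℕ => g n) := by
    have hle : ∀ n : ℕ, g n ≤ (C^2/3) * (1/(n:ℝ)^3) := by
      intro n
      rcases eq_or_ne n 0 with rfl | hn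
      · simp [hg]
      · have := hgle n (by exact_mod_cast hn)
        calc g (n:ℤ) ≤ (C^2/3) * (1/|((n:ℤ):ℝ)|^3) := this
          _ = (C^2/3) * (1/(n:ℝ)^3) := by
              congr 2
              push_cast
              rw [abs_of_nonneg (by positivity : (0:ℝ) ≤ (n:ℝ))]
    exact Summable.of_nonneg_of_le (fun n => hg0 _) hle
      ((Real.summable_one_div_nat_pow.mpr (by norm_num)).mul_left _)
  have hgneg : ∀ m : ℤ, g (-m) = g m := by
    intro m
    simp only [hg]
    rw [show ((-m : ℤ):ℝ) = -(m:ℝ) by push_cast; ring, abs_neg]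
    congr 2
    rw [show -m = -(m) by rfl]
    rw [fCoef_neg]
    exact RCLike.norm_conj _
  have hsum_nat1 : Summable (fun n : ℕ => g ((n:ℤ)+1)) := by
    have := (summable_nat_add_iff 1).mpr hsum_nat
    apply this.congr
    intro n
    congr 1
  have hsum_neg : Summable (fun n : ℕ => g (-((n:ℤ)+1))) := by
    apply hsum_nat1.congr
    intro n
    rw [hgneg]
  have hgsum : Summable g := Summable.of_nat_of_neg_add_one hsum_nat hsum_neg
  -- identify the zeta invariant
  have hZ : (ZetaInv 1 a).re = ∑' m : ℤ, g m := by
    have h1 : ZetaInv 1 a = ∑' m : ℤ, zetaTerm 1 a (pairEquiv m) :=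
      (Equiv.tsum_eq pairEquiv _).symm
    have h2 : ZetaInv 1 a = ((∑' m : ℤ, g m : ℝ) : ℂ) := by
      rw [h1, Complex.ofReal_tsum]
      exact tsum_congr fun m => zetaTerm_eq a m
    rw [h2, Complex.ofReal_re]
  -- split the sum over ℤ
  have hsplit : ∑' m : ℤ, g m = (∑' n : ℕ, g n) + ∑' n : ℕ, g (-((n:ℤ)+1)) :=
    tsum_of_nat_of_neg_add_one hsum_nat hsum_neg
  set T : ℝ := ∑' n : ℕ, g ((n:ℤ)+2) with hT
  have hsumT : Summable (fun n : ℕ => g ((n:ℤ)+2)) := by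
    have := (summable_nat_add_iff 2).mpr hsum_nat
    apply this.congr
    intro n
    congr 1
  have hnat : (∑' n : ℕ, g n) = T := by
    have := (Summable.sum_add_tsum_nat_add 2 hsum_nat).symm
    rw [this]
    have hz : ∑ i ∈ Finset.range 2, g i = 0 := by
      have h0 : g ((0:ℕ):ℤ) = 0 := by norm_num [hg]
      have h1 : g ((1:ℕ):ℤ) = 0 := by norm_num [hg]
      rw [Finset.sum_range_succ, Finset.sum_range_one, h0, h1, add_zero]
    rw [hz, zero_add, hT]
    apply tsum_congr
    intro n
    congr 1
  have hneg : (∑' n : ℕ, g (-((n:ℤ)+1))) = g (-1) + T := by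
    have he : (fun n : ℕ => g (-((n:ℤ)+1))) = fun n : ℕ => g ((n:ℤ)+1) := by
      funext n
      rw [hgneg]
    rw [he]
    have := (Summable.sum_add_tsum_nat_add 1 hsum_nat1).symm
    rw [this]
    have hone : ∑ i ∈ Finset.range 1, g ((i:ℤ)+1) = g 1 := by
      rw [Finset.sum_range_one]
      norm_num
    rw [hone]
    have h1 : g 1 = 0 := by simp only [hg]; norm_num
    have hm1 : g (-1) = 0 := by rw [hgneg]; simp only [hg]; norm_num
    rw [h1, hm1, zero_add, zero_add, hT]
    apply tsum_congr
    intro n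
    congr 1
  have hZT : (ZetaInv 1 a).re = T + T := by
    rw [hZ, hsplit, hnat, hneg]
    have hm1 : g (-1) = 0 := by rw [hgneg]; simp only [hg]; norm_num
    rw [hm1, zero_add]
  -- final comparison
  rw [hZT]
  have hterm : ∀ n : ℕ, (1/2 : ℝ) * (((n:ℝ)+2)^3 * ‖fCoef A ((n:ℤ)+2)‖^2) ≤ 2 * g ((n:ℤ)+2) := by
    intro n
    obtain ⟨x, hx⟩ : ∃ x : ℝ, x = (n:ℝ)+2 := ⟨_, rfl⟩
    have hx2 : (2:ℝ) ≤ x := by rw [hx]; linarith [Nat.cast_nonneg (α:=ℝ) n]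
    have hxa : |(((n:ℤ)+2 : ℤ):ℝ)| = x := by
      rw [hx]
      push_cast
      rw [abs_of_nonneg (by positivity : (0:ℝ) ≤ (n:ℝ)+2)]
    have hy0 : (0:ℝ) ≤ ‖fCoef A ((n:ℤ)+2)‖^2 := by positivity
    have hkey : (1/2 : ℝ) * x^3 ≤ 2 * ((x^3 - x)/3) := by
      nlinarith [mul_nonneg (mul_nonneg (by linarith : (0:ℝ) ≤ x - 2) (by linarith : (0:ℝ) ≤ x + 2)) (by linarith : (0:ℝ) ≤ x)]
    rw [show ((n:ℝ)+2) = x from hx.symm]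
    calc (1/2 : ℝ) * (x^3 * ‖fCoef A ((n:ℤ)+2)‖^2)
        = ((1/2) * x^3) * ‖fCoef A ((n:ℤ)+2)‖^2 := by ring
      _ ≤ (2 * ((x^3 - x)/3)) * ‖fCoef A ((n:ℤ)+2)‖^2 :=
          mul_le_mul_of_nonneg_right hkey hy0
      _ = 2 * g ((n:ℤ)+2) := by
          simp only [hg, hxa]
          ring
  have hsumL : Summable (fun n : ℕ => (1/2 : ℝ) * (((n:ℝ)+2)^3 * ‖fCoef A ((n:ℤ)+2)‖^2)) := by
    apply Summable.of_nonneg_of_le (fun n => by positivity) hterm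
    exact hsumT.mul_left 2
  calc (1/2 : ℝ) * (∑' n : ℕ, ((n:ℝ)+2)^3 * ‖fCoef A ((n:ℤ)+2)‖^2)
      = ∑' n : ℕ, (1/2 : ℝ) * (((n:ℝ)+2)^3 * ‖fCoef A ((n:ℤ)+2)‖^2) := by
        rw [← tsum_mul_left]
    _ ≤ ∑' n : ℕ, 2 * g ((n:ℤ)+2) := hsumL.tsum_le_tsum hterm (hsumT.mul_left 2)
    _ = 2 * T := by rw [tsum_mul_left, ← hT]
    _ = T + T := by ring
end
end
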